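/- arXiv:0804.4324 — 7 statements merged into one kernel-verified Lean document; each statement's English description precedes it below -/
import Mathlib

section
/- Let k ≥ 2, l ≥ 2, a₁, a₂ ∈ ℂ∖{0}, and f = a₁z₁^k + a₂z₂^l ∈ ℂ[z₁,z₂]. Then for P ∈ ℂ[z₁,z₂], one has P·∂₂f ∈ ⟨f, ∂₁f⟩ if and only if P belongs to the sum of the ideal ⟨f, ∂₁f⟩ and the ℂ-linear span of the monomials z₁^i z₂^j with 0 ≤ i ≤ k−2 and 1 ≤ j ≤ l−1. -/
/-!
Since `∂₁f = k a₁ z₁^(k-1)` and `f ≡ a₂ z₂^l` modulo it, `⟨f, ∂₁f⟩` is the monomial ideal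
`⟨z₁^(k-1), z₂^l⟩`. A polynomial lies in a monomial ideal iff each of its monomials does, so
multiplying by `∂₂f = l a₂ z₂^(l-1)` shows that the colon ideal `⟨f, ∂₁f⟩ : ∂₂f` is
`⟨z₁^(k-1), z₂⟩`. Its monomials are those of `⟨z₁^(k-1), z₂^l⟩` together with the `z₁^i z₂^j`,
`i ≤ k-2`, `1 ≤ j ≤ l-1`.
-/

open MvPolynomial Finsupp

theorem Ideal.span_pair_mul_left_unit {R : Type*} [CommSemiring R] {u : R} (hu : IsUnit u)
    (x y : R) : Ideal.span {x, u * y} = Ideal.span {x, y} := by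
  rw [Ideal.span_insert, Ideal.span_singleton_mul_left_unit hu, ← Ideal.span_insert]

namespace MvPolynomial

section CommSemiring

variable {σ R : Type*} [CommSemiring R]

theorem support_mul_X_pow (s : σ) (n : ℕ) (p : MvPolynomial σ R) :
    (p * X s ^ n).support = p.support.map (addRightEmbedding (single s n)) := by
  induction n with
  | zero => ext; simp
  | succ n ih =>
    rw [pow_succ, ← mul_assoc, support_mul_X, ih, Finset.map_map]
    congr 1
    ext m
    simp [add_assoc, single_add]

theorem mem_span_X_pow_pair_iff {i j : σ} {a b : ℕ} {Q : MvPolynomial σ R} :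
    Q ∈ Ideal.span {X i ^ a, X j ^ b} ↔ ∀ m ∈ Q.support, a ≤ m i ∨ b ≤ m j := by
  have hgen : ({X i ^ a, X j ^ b} : Set (MvPolynomial σ R)) =
      (monomial · 1) '' {single i a, single j b} := by
    simp [Set.image_pair, X_pow_eq_monomial]
  rw [hgen, mem_ideal_span_monomial_image]
  simp [single_le_iff]

theorem mul_X_pow_mem_span_X_pow_pair_iff {i j : σ} (hij : i ≠ j) {a b : ℕ} (hb : 1 ≤ b)
    {P : MvPolynomial σ R} :
    P * X j ^ (b - 1) ∈ Ideal.span {X i ^ a, X j ^ b} ↔ P ∈ Ideal.span {X i ^ a, X j} := by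
  rw [mem_span_X_pow_pair_iff, support_mul_X_pow, ← pow_one (X j), mem_span_X_pow_pair_iff]
  simp only [Finset.forall_mem_map, addRightEmbedding_apply, Finsupp.add_apply,
    single_eq_same, single_eq_of_ne hij, add_zero]
  refine forall₂_congr fun m _ => ?_
  omega

theorem restrictScalars_span_X_pow_pair {i j : σ} {a b : ℕ} :
    (Ideal.span {X i ^ a, X j ^ b}).restrictScalars R =
      restrictSupport R {m | a ≤ m i ∨ b ≤ m j} :=
  Submodule.ext fun _ => mem_span_X_pow_pair_iff

theorem span_X_pow_mul_X_pow {a b : ℕ} :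
    Submodule.span R {m : MvPolynomial (Fin 2) R |
        ∃ i j, i < a ∧ 1 ≤ j ∧ j < b ∧ m = X 0 ^ i * X 1 ^ j} =
      restrictSupport R {m | m 0 < a ∧ 1 ≤ m 1 ∧ m 1 < b} := by
  rw [restrictSupport_eq_span]
  congr 1
  ext P
  constructor
  · rintro ⟨i, j, hi, hj, hjb, rfl⟩
    refine ⟨single 0 i + single 1 j, by simp [hi, hj, hjb], ?_⟩
    simp [X_pow_eq_monomial, monomial_mul]
  · rintro ⟨m, ⟨hi, hj, hjb⟩, rfl⟩
    refine ⟨m 0, m 1, hi, hj, hjb, ?_⟩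
    rw [X_pow_eq_monomial, X_pow_eq_monomial, monomial_mul, mul_one]
    congr 1
    ext k
    fin_cases k <;> simp

theorem restrictScalars_span_X_pow_pair_sup_span {a b : ℕ} (hb : 1 ≤ b) :
    (Ideal.span {X 0 ^ a, X 1 ^ b}).restrictScalars R ⊔
        Submodule.span R {m : MvPolynomial (Fin 2) R |
          ∃ i j, i < a ∧ 1 ≤ j ∧ j < b ∧ m = X 0 ^ i * X 1 ^ j} =
      (Ideal.span {X 0 ^ a, X 1}).restrictScalars R := by
  rw [restrictScalars_span_X_pow_pair, span_X_pow_mul_X_pow, ← pow_one (X 1),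
    restrictScalars_span_X_pow_pair, restrictSupport_eq_span, restrictSupport_eq_span,
    restrictSupport_eq_span, ← Submodule.span_union, ← Set.image_union]
  congr 2
  ext m
  simp only [Set.mem_union, Set.mem_ofPred_eq]
  omega

theorem pderiv_C_mul_X_pow_add_C_mul_X_pow {i j : σ} (hij : i ≠ j) (a₁ a₂ : R) (k l : ℕ) :
    pderiv i (C a₁ * X i ^ k + C a₂ * X j ^ l) = C (k * a₁) * X i ^ (k - 1) := by
  simp only [map_add, Derivation.leibniz, Derivation.leibniz_pow, pderiv_X_self,
    pderiv_X_of_ne hij.symm, derivation_C, smul_eq_mul, nsmul_eq_mul, mul_one,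
    mul_zero, add_zero, C_mul, map_natCast]
  ring

end CommSemiring

theorem span_C_mul_X_pow_add_C_mul_X_pow_pderiv {σ K : Type*} [Field K] [CharZero K] {i j : σ}
    (hij : i ≠ j) {a₁ a₂ : K} (ha₁ : a₁ ≠ 0) (ha₂ : a₂ ≠ 0) {k : ℕ} (hk : 1 ≤ k) (l : ℕ) :
    Ideal.span {C a₁ * X i ^ k + C a₂ * X j ^ l, pderiv i (C a₁ * X i ^ k + C a₂ * X j ^ l)} =
      Ideal.span {X i ^ (k - 1), X j ^ l} := by
  have hunit {c : K} (hc : c ≠ 0) : IsUnit (C c : MvPolynomial σ K) := hc.isUnit.map C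
  have hX : C a₁ * X i ^ k = (C a₁ * X i) * X i ^ (k - 1) := by
    rw [mul_assoc, ← pow_succ', Nat.sub_add_cancel hk]
  rw [pderiv_C_mul_X_pow_add_C_mul_X_pow hij,
    Ideal.span_pair_mul_left_unit (hunit (mul_ne_zero (Nat.cast_ne_zero.2 (by omega)) ha₁)), hX,
    Ideal.span_pair_mul_right_add, Ideal.span_pair_comm, Ideal.span_pair_mul_left_unit (hunit ha₂)]

end MvPolynomial

/-- For `k, l ≥ 2`, nonzero `a₁, a₂ ∈ ℂ` and
`f = a₁z₁^k + a₂z₂^l ∈ ℂ[z₁,z₂]`, a polynomial `P` satisfies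
`P·∂₂f ∈ ⟨f, ∂₁f⟩` if and only if `P` lies in the sum of the ideal `⟨f, ∂₁f⟩`
and the ℂ-span of the monomials `z₁^i z₂^j` with `0 ≤ i ≤ k-2`, `1 ≤ j ≤ l-1`. -/
theorem stmt_2 (k l : ℕ) (hk : 2 ≤ k) (hl : 2 ≤ l) (a₁ a₂ : ℂ)
    (ha₁ : a₁ ≠ 0) (ha₂ : a₂ ≠ 0) (f : MvPolynomial (Fin 2) ℂ)
    (hf : f = C a₁ * X 0 ^ k + C a₂ * X 1 ^ l) (P : MvPolynomial (Fin 2) ℂ) :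
    P * pderiv 1 f ∈ Ideal.span {f, pderiv 0 f} ↔
      P ∈ (Ideal.span {f, pderiv 0 f}).restrictScalars ℂ ⊔
        Submodule.span ℂ
          {m : MvPolynomial (Fin 2) ℂ |
            ∃ i j : ℕ, i ≤ k - 2 ∧ 1 ≤ j ∧ j ≤ l - 1 ∧ m = X 0 ^ i * X 1 ^ j} := by
  have hmonomials : {m : MvPolynomial (Fin 2) ℂ |
      ∃ i j : ℕ, i ≤ k - 2 ∧ 1 ≤ j ∧ j ≤ l - 1 ∧ m = X 0 ^ i * X 1 ^ j} =
      {m | ∃ i j : ℕ, i < k - 1 ∧ 1 ≤ j ∧ j < l ∧ m = X 0 ^ i * X 1 ^ j} := by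
    ext m
    refine exists₂_congr fun i j => ?_
    constructor <;> rintro ⟨hi, hj, hjl, rfl⟩ <;> exact ⟨by omega, hj, by omega, rfl⟩
  have hla₂ : (l : ℂ) * a₂ ≠ 0 := mul_ne_zero (Nat.cast_ne_zero.2 (by omega)) ha₂
  subst hf
  rw [span_C_mul_X_pow_add_C_mul_X_pow_pderiv zero_ne_one ha₁ ha₂ (by omega), hmonomials,
    restrictScalars_span_X_pow_pair_sup_span (by omega), Submodule.restrictScalars_mem,
    add_comm, pderiv_C_mul_X_pow_add_C_mul_X_pow one_ne_zero, mul_left_comm,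
    Ideal.unit_mul_mem_iff_mem _ (hla₂.isUnit.map C)]
  exact mul_X_pow_mem_span_X_pow_pair_iff zero_ne_one (by omega)
end

section
/- Let k ≥ 4, f = z₁²z₂ + z₂^{k-1} ∈ ℂ[z₁,z₂], and Q := ℂ[z₁,z₂]/⟨f, ∂₂f⟩. Then: (1) the classes of the monomials z₁^i z₂^j with i ∈ {0,1} and 0 ≤ j ≤ k−2 form a ℂ-basis of Q; and (2) the subspace {p ∈ Q : p·∂₁f = 0 in Q} has ℂ-basis given by the classes of z₂^{k-2} and of z₁z₂^j for 0 ≤ j ≤ k−2, hence has dimension k. -/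
/-!
Since `z₂ · ∂₂f - f = (k - 2) z₂^(k-1)`, the ideal `⟨f, ∂₂f⟩` is `⟨z₁² + (k-1) z₂^(k-2), z₂^(k-1)⟩`,
so `Q` is the tower `(ℂ[z₂]/(z₂^(k-1)))[z₁]/(z₁² + (k-1) z₂^(k-2))`, and the product of the two
power bases is the monomial basis of (1). Multiplication by `∂₁f = 2 z₁z₂` kills `z₂^(k-2)` and
every `z₁z₂^j` (because `z₁²z₂ = 0` in `Q`), and maps `z₂^j` to `2 z₁z₂^(j+1)` for `j < k - 2`;
these `k - 2` images are independent, so rank–nullity pins the kernel down to the span of the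
`k` vectors of (2).
-/

open MvPolynomial

noncomputable section

variable {K : Type*} [Field K]

def xyIdeal (d a n : ℕ) (c : K) : Ideal (MvPolynomial (Fin 2) K) :=
  Ideal.span {X 0 ^ d + C c * X 1 ^ a, X 1 ^ n}

variable (K) in
abbrev TruncPoly (n : ℕ) : Type _ := AdjoinRoot (Polynomial.X ^ n : Polynomial K)

def towerPoly (d a n : ℕ) (c : K) : Polynomial (TruncPoly K n) :=
  Polynomial.X ^ d + Polynomial.C (algebraMap K _ c * AdjoinRoot.root _ ^ a)

abbrev Tower (d a n : ℕ) (c : K) : Type _ := AdjoinRoot (towerPoly d a n c)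

section TowerEquiv

variable (d a n : ℕ) (c : K)

theorem truncPoly_root_pow_self : AdjoinRoot.root (Polynomial.X ^ n : Polynomial K) ^ n = 0 := by
  simpa using AdjoinRoot.eval₂_root (Polynomial.X ^ n : Polynomial K)

theorem tower_root_pow_add_eq_zero : AdjoinRoot.root (towerPoly d a n c) ^ d +
    algebraMap K _ c * AdjoinRoot.of _ (AdjoinRoot.root (Polynomial.X ^ n : Polynomial K)) ^ a =
      0 := by
  have h : (Polynomial.X ^ d + Polynomial.C (algebraMap K _ c * AdjoinRoot.root _ ^ a)).eval₂
      (AdjoinRoot.of (towerPoly d a n c)) (AdjoinRoot.root (towerPoly d a n c)) = 0 :=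
    AdjoinRoot.eval₂_root _
  rwa [Polynomial.eval₂_add, Polynomial.eval₂_X_pow, Polynomial.eval₂_C, map_mul, map_pow,
    ← AdjoinRoot.algebraMap_eq, ← IsScalarTower.algebraMap_apply] at h

def toTower : MvPolynomial (Fin 2) K ⧸ xyIdeal d a n c →ₐ[K] Tower d a n c :=
  Ideal.Quotient.liftₐ _ (aeval ![AdjoinRoot.root _, AdjoinRoot.of _ (AdjoinRoot.root _)])
    fun p hp => by
      refine (Ideal.span_le (I := RingHom.ker _)).2 ?_ hp
      rintro _ (rfl | rfl)
      · simpa using tower_root_pow_add_eq_zero d a n c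
      · simp only [SetLike.mem_coe, RingHom.mem_ker, map_pow, aeval_X]
        simp [← map_pow, truncPoly_root_pow_self]

@[simp]
theorem toTower_mk (p : MvPolynomial (Fin 2) K) :
    toTower d a n c (Ideal.Quotient.mk _ p) =
      aeval ![AdjoinRoot.root _, AdjoinRoot.of _ (AdjoinRoot.root _)] p :=
  rfl

def ofTower : Tower d a n c →ₐ[K] MvPolynomial (Fin 2) K ⧸ xyIdeal d a n c :=
  AdjoinRoot.liftAlgHom _
    (AdjoinRoot.liftAlgHom _ (Algebra.ofId _ _) (Ideal.Quotient.mk _ (X 1)) (by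
      rw [Polynomial.eval₂_X_pow, ← map_pow, Ideal.Quotient.eq_zero_iff_mem]
      exact Ideal.subset_span (by simp)))
    (Ideal.Quotient.mk _ (X 0)) (by
      have h : Ideal.Quotient.mk (xyIdeal d a n c) (X 0 ^ d + C c * X 1 ^ a) = 0 :=
        Ideal.Quotient.eq_zero_iff_mem.2 (Ideal.subset_span (Set.mem_insert _ _))
      rw [towerPoly, Polynomial.eval₂_add, Polynomial.eval₂_X_pow, Polynomial.eval₂_C]
      simpa [← Ideal.Quotient.mk_algebraMap] using h)

@[simp]
theorem ofTower_root : ofTower d a n c (AdjoinRoot.root _) = Ideal.Quotient.mk _ (X 0) := by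
  simp [ofTower]

@[simp]
theorem ofTower_of_root :
    ofTower d a n c (AdjoinRoot.of _ (AdjoinRoot.root _)) = Ideal.Quotient.mk _ (X 1) := by
  simp [ofTower]

def quotEquivTower : (MvPolynomial (Fin 2) K ⧸ xyIdeal d a n c) ≃ₐ[K] Tower d a n c :=
  AlgEquiv.ofAlgHom (toTower d a n c) (ofTower d a n c)
    (AdjoinRoot.algHom_ext' (AdjoinRoot.algHom_ext (by simp)) (by simp))
    (Ideal.Quotient.algHom_ext K <| MvPolynomial.algHom_ext fun i => by fin_cases i <;> simp)

end TowerEquiv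

section MonomialBasis

variable {d n : ℕ} (a : ℕ) (c : K)

instance [NeZero n] : Nontrivial (TruncPoly K n) :=
  AdjoinRoot.nontrivial _ (by simp [NeZero.ne n])

theorem towerPoly_monic [NeZero d] : (towerPoly d a n c).Monic :=
  Polynomial.monic_X_pow_add (Polynomial.degree_C_le.trans_lt (by exact_mod_cast NeZero.pos d))

def towerBasis [NeZero d] [NeZero n] : Module.Basis (Fin d × Fin n) K (Tower d a n c) :=
  ((AdjoinRoot.powerBasis' (Polynomial.monic_X_pow n)).basis.smulTower
    (AdjoinRoot.powerBasis' (towerPoly_monic a c)).basis).reindex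
    ((Equiv.prodComm _ _).trans
      ((finCongr ((AdjoinRoot.powerBasis'_dim _).trans Polynomial.natDegree_X_pow_add_C)).prodCongr
        (finCongr ((AdjoinRoot.powerBasis'_dim _).trans (Polynomial.natDegree_X_pow n)))))

theorem towerBasis_apply [NeZero d] [NeZero n] (i : Fin d) (j : Fin n) :
    towerBasis a c (i, j) =
      AdjoinRoot.root _ ^ (i : ℕ) * AdjoinRoot.of _ (AdjoinRoot.root _ ^ (j : ℕ)) := by
  simp only [towerBasis, Module.Basis.reindex_apply, Module.Basis.smulTower_apply,
    PowerBasis.basis_eq_pow, AdjoinRoot.powerBasis'_gen]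
  change AdjoinRoot.root _ ^ (j : ℕ) • AdjoinRoot.root _ ^ (i : ℕ) = _
  rw [Algebra.smul_def, mul_comm]
  rfl

def xyBasis [NeZero d] [NeZero n] :
    Module.Basis (Fin d × Fin n) K (MvPolynomial (Fin 2) K ⧸ xyIdeal d a n c) :=
  (towerBasis a c).map (quotEquivTower d a n c).symm.toLinearEquiv

theorem xyBasis_apply [NeZero d] [NeZero n] (p : Fin d × Fin n) :
    xyBasis a c p = Ideal.Quotient.mk _ (X 0 ^ (p.1 : ℕ) * X 1 ^ (p.2 : ℕ)) := by
  obtain ⟨i, j⟩ := p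
  simp [xyBasis, towerBasis_apply, quotEquivTower]

end MonomialBasis

theorem LinearMap.ker_eq_span_of_finrank_le_card_add_card {V W ι κ : Type*}
    [AddCommGroup V] [Module K V] [FiniteDimensional K V] [AddCommGroup W] [Module K W]
    [Fintype ι] [Fintype κ] {f : V →ₗ[K] W} {v : ι → V} {w : κ → W}
    (hv : LinearIndependent K v) (hfv : ∀ i, f (v i) = 0)
    (hw : LinearIndependent K w) (hwf : ∀ j, w j ∈ LinearMap.range f)
    (hdim : Module.finrank K V ≤ Fintype.card ι + Fintype.card κ) :
    LinearMap.ker f = Submodule.span K (Set.range v) := by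
  have hle : Submodule.span K (Set.range v) ≤ LinearMap.ker f :=
    Submodule.span_le.2 (Set.range_subset_iff.2 hfv)
  have hrange : Fintype.card κ ≤ Module.finrank K (LinearMap.range f) :=
    (finrank_span_eq_card hw).symm.le.trans
      (Submodule.finrank_mono (Submodule.span_le.2 (Set.range_subset_iff.2 hwf)))
  have := f.finrank_range_add_finrank_ker
  refine (Submodule.eq_of_le_of_finrank_le hle ?_).symm
  rw [finrank_span_eq_card hv]
  omega

theorem pderiv_zero_X0_sq_mul_X1_add_X1_pow (n : ℕ) :
    pderiv 0 (X 0 ^ 2 * X 1 + X 1 ^ n : MvPolynomial (Fin 2) K) = C 2 * (X 0 * X 1) := by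
  rw [map_ofNat C 2]
  simp only [Fin.isValue, map_add, Derivation.leibniz, pderiv_X, ne_eq, one_ne_zero,
    not_false_eq_true, Pi.single_eq_of_ne, smul_eq_mul, mul_zero, Derivation.leibniz_pow,
    Nat.add_one_sub_one, pow_one, Pi.single_eq_same, mul_one, nsmul_eq_mul, Nat.cast_ofNat,
    zero_add, add_zero]
  ring

theorem pderiv_one_X0_sq_mul_X1_add_X1_pow (m : ℕ) :
    pderiv 1 (X 0 ^ 2 * X 1 + X 1 ^ (m + 1) : MvPolynomial (Fin 2) K) =
      X 0 ^ 2 + C ((m : K) + 1) * X 1 ^ m := by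
  simp [pderiv_X, map_add]

theorem span_pderiv_one_eq_xyIdeal {m : ℕ} (hm : (m : K) ≠ 0) :
    Ideal.span {X 0 ^ 2 * X 1 + X 1 ^ (m + 1),
      pderiv 1 (X 0 ^ 2 * X 1 + X 1 ^ (m + 1) : MvPolynomial (Fin 2) K)} =
      xyIdeal 2 m (m + 1) ((m : K) + 1) := by
  rw [pderiv_one_X0_sq_mul_X1_add_X1_pow, xyIdeal]
  apply le_antisymm <;> rw [Ideal.span_le] <;> rintro _ (rfl | rfl) <;>
    rw [SetLike.mem_coe, Ideal.mem_span_pair]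
  · exact ⟨X 1, -C (m : K), by simp only [map_add, map_one]; ring⟩
  · exact ⟨1, 0, by ring⟩
  · exact ⟨0, 1, by ring⟩
  · refine ⟨-C (m : K)⁻¹, C (m : K)⁻¹ * X 1, ?_⟩
    have hinv : C (m : K)⁻¹ * C (m : K) = (1 : MvPolynomial (Fin 2) K) := by
      rw [← C_mul, inv_mul_cancel₀ hm, C_1]
    simp only [map_add, map_one]
    linear_combination X 1 ^ (m + 1) * hinv

section Kernel

variable (m : ℕ) (c : K)

theorem X1_pow_succ_mem_xyIdeal : X 1 ^ (m + 1) ∈ xyIdeal 2 m (m + 1) c :=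
  Ideal.subset_span (Set.mem_insert_of_mem _ rfl)

theorem X0_sq_mul_X1_mem_xyIdeal : X 0 ^ 2 * X 1 ∈ xyIdeal 2 m (m + 1) c := by
  rw [xyIdeal, Ideal.mem_span_pair]
  exact ⟨X 1, -C c, by ring⟩

def annXYFamily : Fin (m + 2) → MvPolynomial (Fin 2) K ⧸ xyIdeal 2 m (m + 1) c :=
  Fin.cons (Ideal.Quotient.mk _ (X 1 ^ m)) fun j : Fin (m + 1) =>
    Ideal.Quotient.mk _ (X 0 * X 1 ^ (j : ℕ))

theorem linearIndependent_annXYFamily : LinearIndependent K (annXYFamily m c) := by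
  have h : annXYFamily m c =
      xyBasis m c ∘ Fin.cons ((0 : Fin 2), Fin.last m) fun j : Fin (m + 1) => ((1 : Fin 2), j) := by
    ext i
    refine Fin.cases ?_ (fun j => ?_) i <;> simp [annXYFamily, xyBasis_apply]
  rw [h]
  refine (xyBasis m c).linearIndependent.comp _ (Fin.cons_injective_iff.2 ⟨?_, ?_⟩)
  · simp
  · intro i j hij
    simpa using hij

theorem ker_mulRight_C_mul_X0_mul_X1 {e : K} (he : e ≠ 0) :
    LinearMap.ker (LinearMap.mulRight K
        (Ideal.Quotient.mk (xyIdeal 2 m (m + 1) c) (C e * (X 0 * X 1)))) =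
      Submodule.span K (Set.range (annXYFamily m c)) := by
  have : FiniteDimensional K (MvPolynomial (Fin 2) K ⧸ xyIdeal 2 m (m + 1) c) :=
    Module.Finite.of_basis (xyBasis m c)
  refine LinearMap.ker_eq_span_of_finrank_le_card_add_card (linearIndependent_annXYFamily m c) ?_
    (w := fun j : Fin m => xyBasis m c (1, j.succ))
    ((xyBasis m c).linearIndependent.comp _ fun i j hij => by simpa using hij) ?_ ?_
  · refine Fin.cases ?_ fun j => ?_
    · rw [annXYFamily, Fin.cons_zero, LinearMap.mulRight_apply, ← map_mul,
        Ideal.Quotient.eq_zero_iff_mem, show (X 1 ^ m * (C e * (X 0 * X 1)) :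
          MvPolynomial (Fin 2) K) = C e * X 0 * X 1 ^ (m + 1) by ring]
      exact Ideal.mul_mem_left _ _ (X1_pow_succ_mem_xyIdeal m c)
    · rw [annXYFamily, Fin.cons_succ, LinearMap.mulRight_apply, ← map_mul,
        Ideal.Quotient.eq_zero_iff_mem, show (X 0 * X 1 ^ (j : ℕ) * (C e * (X 0 * X 1)) :
          MvPolynomial (Fin 2) K) = C e * X 1 ^ (j : ℕ) * (X 0 ^ 2 * X 1) by ring]
      exact Ideal.mul_mem_left _ _ (X0_sq_mul_X1_mem_xyIdeal m c)
  · intro j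
    refine ⟨Ideal.Quotient.mk _ (C e⁻¹ * X 1 ^ (j : ℕ)), ?_⟩
    have hinv : C e⁻¹ * C e = (1 : MvPolynomial (Fin 2) K) := by
      rw [← C_mul, inv_mul_cancel₀ he, C_1]
    rw [LinearMap.mulRight_apply, ← map_mul, xyBasis_apply]
    congr 1
    simp only [Fin.val_succ, Fin.isValue, Fin.val_one, pow_one]
    linear_combination X 0 * X 1 ^ ((j : ℕ) + 1) * hinv
  · rw [Module.finrank_eq_card_basis (xyBasis m c)]
    simp only [Fintype.card_prod, Fintype.card_fin]
    omega

end Kernel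

end

/-- For `k ≥ 4`, `f = z₁²z₂ + z₂^{k-1}` and
`Q = ℂ[z₁,z₂]/⟨f, ∂₂f⟩`: (1) the classes of `z₁^i z₂^j`, `i ∈ {0,1}`,
`0 ≤ j ≤ k−2`, form a ℂ-basis of `Q`; (2) the subspace
`{p ∈ Q : p·∂₁f = 0}` has ℂ-basis the classes of `z₂^{k-2}` and `z₁z₂^j`
for `0 ≤ j ≤ k−2`, hence dimension `k`. -/
theorem stmt_7 (k : ℕ) (hk : 4 ≤ k) (f : MvPolynomial (Fin 2) ℂ)
    (hf : f = X 0 ^ 2 * X 1 + X 1 ^ (k - 1))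
    (π : MvPolynomial (Fin 2) ℂ →+* (MvPolynomial (Fin 2) ℂ ⧸ Ideal.span {f, pderiv 1 f}))
    (hπ : π = Ideal.Quotient.mk (Ideal.span {f, pderiv 1 f}))
    (w : Fin 2 × Fin (k - 1) → MvPolynomial (Fin 2) ℂ ⧸ Ideal.span {f, pderiv 1 f})
    (hw : ∀ p, w p = π (X 0 ^ (p.1 : ℕ) * X 1 ^ (p.2 : ℕ)))
    (u : Fin k → MvPolynomial (Fin 2) ℂ ⧸ Ideal.span {f, pderiv 1 f})
    (hu : ∀ i : Fin k, u i =
      if (i : ℕ) = 0 then π (X 1 ^ (k - 2)) else π (X 0 * X 1 ^ ((i : ℕ) - 1))) :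
    (LinearIndependent ℂ w ∧ Submodule.span ℂ (Set.range w) = ⊤) ∧
    (LinearIndependent ℂ u ∧
      Submodule.span ℂ (Set.range u) =
        LinearMap.ker (LinearMap.mulRight ℂ (π (pderiv 0 f))) ∧
      Module.finrank ℂ
        (LinearMap.ker (LinearMap.mulRight ℂ (π (pderiv 0 f)))) = k) := by
  obtain ⟨m, rfl⟩ : ∃ m, k = m + 2 := ⟨k - 2, by omega⟩
  subst hf hπ
  have hm : (m : ℂ) ≠ 0 := Nat.cast_ne_zero.2 (by omega)
  rw [pderiv_zero_X0_sq_mul_X1_add_X1_pow]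
  -- `w` and `u` have types mentioning the ideal, so it is abstracted before being rewritten.
  generalize hJ : Ideal.span (α := MvPolynomial (Fin 2) ℂ) _ = J at w u hw hu ⊢
  rw [show m + 2 - 1 = m + 1 from rfl, span_pderiv_one_eq_xyIdeal hm] at hJ
  subst hJ
  have hw' : w = ⇑(xyBasis (n := m + 1) m ((m : ℂ) + 1)) :=
    funext fun p : Fin 2 × Fin (m + 1) => (hw p).trans (xyBasis_apply _ _ p).symm
  have hu' : u = annXYFamily m ((m : ℂ) + 1) := funext fun i => (hu i).trans <| by
    refine Fin.cases ?_ (fun j => ?_) i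
    · exact if_pos rfl
    · rw [if_neg (show (j.succ : ℕ) ≠ 0 from Nat.succ_ne_zero _), annXYFamily, Fin.cons_succ]
      rfl
  subst hw' hu'
  rw [ker_mulRight_C_mul_X0_mul_X1 m _ two_ne_zero]
  exact ⟨⟨(xyBasis m _).linearIndependent, (xyBasis m _).span_eq⟩,
    linearIndependent_annXYFamily m _, rfl, by
      rw [finrank_span_eq_card (linearIndependent_annXYFamily m _), Fintype.card_fin]⟩
end

section
/- Let 2 ≤ i ≤ j ≤ k, a₁, a₂, a₃ ∈ ℂ∖{0}, and f = a₁z₁^i + a₂z₂^j + a₃z₃^k ∈ ℂ[z₁,z₂,z₃]. Then the quotient ℂ[z₁,z₂,z₃]/⟨∂₁f, ∂₂f, ∂₃f⟩ is a ℂ-vector space of dimension (i−1)(j−1)(k−1), with basis given by the classes of the monomials z₁^p z₂^q z₃^r for 0 ≤ p ≤ i−2, 0 ≤ q ≤ j−2, 0 ≤ r ≤ k−2. -/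
/-!
Each partial derivative of `f` is a nonzero multiple of a pure power, `∂ₛf = aₛ eₛ zₛ^(eₛ-1)`,
so the Jacobian ideal is the monomial ideal `⟨z₁^(i-1), z₂^(j-1), z₃^(k-1)⟩`. A polynomial lies
in this ideal exactly when all its monomials do, so as a vector space the polynomial ring is the
direct sum of the span of the monomials in the ideal and the span of those outside it, namely the
`z^m` with `m₁ < i-1`, `m₂ < j-1`, `m₃ < k-1`; the latter maps isomorphically onto the quotient.
-/

open MvPolynomial

namespace MvPolynomial

variable {R σ : Type*} [CommRing R]

lemma isCompl_restrictSupport_compl (s : Set (σ →₀ ℕ)) :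
    IsCompl (restrictSupport R s) (restrictSupport R sᶜ) where
  disjoint := by
    refine Submodule.disjoint_def.mpr fun p hs hsc => ?_
    rw [mem_restrictSupport_iff] at hs hsc
    refine support_eq_empty.mp (Finset.coe_eq_empty.mp ?_)
    exact Set.subset_empty_iff.mp fun m hm => hsc hm (hs hm)
  codisjoint := by
    rw [codisjoint_iff, restrictSupport_eq_span, restrictSupport_eq_span, ← Submodule.span_union,
      ← Set.image_union, Set.union_compl_self, ← restrictSupport_eq_span, restrictSupport_univ]

lemma mem_span_range_X_pow_iff {n : σ → ℕ} {p : MvPolynomial σ R} :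
    p ∈ Ideal.span (Set.range fun s => X s ^ n s) ↔
      ∀ m ∈ p.support, ∃ s, n s ≤ m s := by
  have : (Set.range fun s => (X s ^ n s : MvPolynomial σ R)) =
      (monomial · 1) '' Set.range fun s => Finsupp.single s (n s) := by
    simp [← Set.range_comp, Function.comp_def, X_pow_eq_monomial]
  simp [this, mem_ideal_span_monomial_image, Finsupp.single_le_iff]

lemma restrictScalars_span_range_X_pow (n : σ → ℕ) :
    (Ideal.span (Set.range fun s => X s ^ n s)).restrictScalars R =
      restrictSupport R {m : σ →₀ ℕ | ∀ s, m s < n s}ᶜ := by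
  ext p
  simp [mem_span_range_X_pow_iff, mem_restrictSupport_iff, Set.subset_def]

lemma coe_basisRestrictSupport_apply (s : Set (σ →₀ ℕ)) (m : s) :
    (basisRestrictSupport R s m : MvPolynomial σ R) = monomial m 1 := by
  ext d
  change ((Finsupp.supportedEquivFinsupp (M := R) (R := R) s).symm (Finsupp.single m 1) :
    (σ →₀ ℕ) →₀ R) d = _
  rw [Finsupp.supportedEquivFinsupp_symm_single]
  rfl

variable (R) in
noncomputable def basisQuotientSpanXPow (n : σ → ℕ) :
    Module.Basis {m : σ →₀ ℕ // ∀ s, m s < n s} R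
      (MvPolynomial σ R ⧸ Ideal.span (Set.range fun s => (X s ^ n s : MvPolynomial σ R))) :=
  (basisRestrictSupport R {m : σ →₀ ℕ | ∀ s, m s < n s}).map <|
    (Submodule.quotientEquivOfIsCompl _ _ <| by
        rw [restrictScalars_span_range_X_pow]
        exact (isCompl_restrictSupport_compl _).symm).symm ≪≫ₗ
      Submodule.Quotient.restrictScalarsEquiv R _

lemma basisQuotientSpanXPow_apply (n : σ → ℕ) (m : {m : σ →₀ ℕ // ∀ s, m s < n s}) :
    basisQuotientSpanXPow R n m = Ideal.Quotient.mk _ (monomial (m : σ →₀ ℕ) 1) := by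
  simp only [basisQuotientSpanXPow, Module.Basis.map_apply, LinearEquiv.trans_apply,
    Submodule.quotientEquivOfIsCompl_symm_apply]
  exact congrArg _ (coe_basisRestrictSupport_apply _ _)

variable [Fintype σ]

lemma pderiv_sum_C_mul_X_pow (a : σ → R) (e : σ → ℕ) (s : σ) :
    pderiv s (∑ t, C (a t) * X t ^ e t) = C (a s * e s) * X s ^ (e s - 1) := by
  classical
  simp [pderiv_X, Pi.single_apply, Finset.sum_ite_eq', mul_assoc, mul_left_comm]

lemma span_range_pderiv_sum_C_mul_X_pow {a : σ → R} {e : σ → ℕ}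
    (h : ∀ s, IsUnit (a s * e s)) :
    Ideal.span (Set.range fun s => pderiv s (∑ t, C (a t) * X t ^ e t)) =
      Ideal.span (Set.range fun s => X s ^ (e s - 1)) := by
  simp only [Ideal.span, Submodule.span_range_eq_iSup, pderiv_sum_C_mul_X_pow]
  exact iSup_congr fun s => Ideal.span_singleton_mul_left_unit ((h s).map C) _

end MvPolynomial

lemma Fin.range_fin_three {α : Type*} (f : Fin 3 → α) : Set.range f = {f 0, f 1, f 2} := by
  ext; simp [Fin.exists_fin_succ, eq_comm]

noncomputable def finProdFinProdFinEquivExponents (a b c : ℕ) :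
    Fin a × Fin b × Fin c ≃ {m : Fin 3 →₀ ℕ // ∀ s, m s < ![a, b, c] s} where
  toFun t := ⟨Finsupp.equivFunOnFinite.symm ![t.1, t.2.1, t.2.2], by simp [Fin.forall_fin_succ]⟩
  invFun m := (⟨m.1 0, m.2 0⟩, ⟨m.1 1, m.2 1⟩, ⟨m.1 2, m.2 2⟩)
  left_inv t := by simp
  right_inv m := by ext s; fin_cases s <;> rfl

lemma monomial_finProdFinProdFinEquivExponents {R : Type*} [CommRing R] {a b c : ℕ}
    (t : Fin a × Fin b × Fin c) :
    monomial (finProdFinProdFinEquivExponents a b c t : Fin 3 →₀ ℕ) (1 : R) =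
      X 0 ^ (t.1 : ℕ) * X 1 ^ (t.2.1 : ℕ) * X 2 ^ (t.2.2 : ℕ) := by
  simp [monomial_eq, Finsupp.prod_fintype, Fin.prod_univ_three,
    finProdFinProdFinEquivExponents]

theorem exists_basis_quotient_span_X_pow_fin_three (R : Type*) [CommRing R] (a b c : ℕ) :
    ∃ B : Module.Basis (Fin a × Fin b × Fin c) R
        (MvPolynomial (Fin 3) R ⧸
          Ideal.span {(X 0 ^ a : MvPolynomial (Fin 3) R), X 1 ^ b, X 2 ^ c}),
      ∀ t, B t =
        Ideal.Quotient.mk _ (X 0 ^ (t.1 : ℕ) * X 1 ^ (t.2.1 : ℕ) * X 2 ^ (t.2.2 : ℕ)) := by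
  have hrange : {X 0 ^ a, X 1 ^ b, X 2 ^ c} =
      Set.range fun s : Fin 3 => (X s ^ ![a, b, c] s : MvPolynomial (Fin 3) R) := by
    rw [Fin.range_fin_three]; rfl
  rw [hrange]
  exact ⟨(basisQuotientSpanXPow R _).reindex (finProdFinProdFinEquivExponents a b c).symm,
    fun t => by simp [basisQuotientSpanXPow_apply, monomial_finProdFinProdFinEquivExponents]⟩

/-- For `2 ≤ i ≤ j ≤ k`, nonzero `a₁, a₂, a₃ ∈ ℂ` and
`f = a₁z₁^i + a₂z₂^j + a₃z₃^k`, the quotient `ℂ[z₁,z₂,z₃]/⟨∂₁f, ∂₂f, ∂₃f⟩`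
has ℂ-dimension `(i−1)(j−1)(k−1)`, with basis the classes of the monomials
`z₁^p z₂^q z₃^r`, `0 ≤ p ≤ i−2`, `0 ≤ q ≤ j−2`, `0 ≤ r ≤ k−2`. -/
theorem stmt_11 (i j k : ℕ) (hi : 2 ≤ i) (hij : i ≤ j) (hjk : j ≤ k)
    (a₁ a₂ a₃ : ℂ) (ha₁ : a₁ ≠ 0) (ha₂ : a₂ ≠ 0) (ha₃ : a₃ ≠ 0)
    (f : MvPolynomial (Fin 3) ℂ)
    (hf : f = C a₁ * X 0 ^ i + C a₂ * X 1 ^ j + C a₃ * X 2 ^ k)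
    (v : Fin (i - 1) × Fin (j - 1) × Fin (k - 1) →
      MvPolynomial (Fin 3) ℂ ⧸ Ideal.span {pderiv 0 f, pderiv 1 f, pderiv 2 f})
    (hv : ∀ t, v t = Ideal.Quotient.mk (Ideal.span {pderiv 0 f, pderiv 1 f, pderiv 2 f})
      (X 0 ^ (t.1 : ℕ) * X 1 ^ (t.2.1 : ℕ) * X 2 ^ (t.2.2 : ℕ))) :
    Module.finrank ℂ
      (MvPolynomial (Fin 3) ℂ ⧸ Ideal.span {pderiv 0 f, pderiv 1 f, pderiv 2 f}) =
      (i - 1) * (j - 1) * (k - 1) ∧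
    LinearIndependent ℂ v ∧
    Submodule.span ℂ (Set.range v) = ⊤ := by
  have hf' : f = ∑ s, C (![a₁, a₂, a₃] s) * X s ^ (![i, j, k] s) := by
    simp [hf, Fin.sum_univ_three]
  have hunit : ∀ s : Fin 3, IsUnit (![a₁, a₂, a₃] s * (![i, j, k] s : ℂ)) := by
    intro s
    fin_cases s <;> simp [ha₁, ha₂, ha₃] <;> omega
  have hJ : Ideal.span {pderiv 0 f, pderiv 1 f, pderiv 2 f} =
      Ideal.span {X 0 ^ (i - 1), X 1 ^ (j - 1), X 2 ^ (k - 1)} := by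
    simpa only [← hf', Fin.range_fin_three, Matrix.cons_val] using
      span_range_pderiv_sum_C_mul_X_pow hunit
  generalize Ideal.span {pderiv 0 f, pderiv 1 f, pderiv 2 f} = J at v hv hJ ⊢
  subst hJ
  obtain ⟨B, hB⟩ := exists_basis_quotient_span_X_pow_fin_three ℂ (i - 1) (j - 1) (k - 1)
  have hBv : ∀ t, B t = v t := fun t => (hB t).trans (hv t).symm
  obtain rfl := funext hBv
  exact ⟨by simp [Module.finrank_eq_card_basis B, mul_assoc], B.linearIndependent, B.span_eq⟩
end

section
/- Let 2 ≤ i ≤ j ≤ k, a₁, a₂, a₃ ∈ ℂ∖{0}, f = a₁z₁^i + a₂z₂^j + a₃z₃^k ∈ ℂ[z₁,z₂,z₃], and A := ℂ[z₁,z₂,z₃]/⟨f⟩. Write ∇f = (∂₁f, ∂₂f, ∂₃f) ∈ A³, and for g = (g₁,g₂,g₃) ∈ A³ let ∇f ∧ g denote the cross product (∂₂f·g₃ − ∂₃f·g₂, ∂₃f·g₁ − ∂₁f·g₃, ∂₁f·g₂ − ∂₂f·g₁). Then {g ∈ A³ : ∇f ∧ g = 0} = {β·∇f : β ∈ A}.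 -/
/-!
In `R = ℂ[z₁,z₂,z₃]` the gradient `u = ∇f = (c₁ z₁^(i-1), c₂ z₂^(j-1), c₃ z₃^(k-1))`,
`cₗ ≠ 0`, is a regular sequence, so its Koszul complex `R → R³ → R³ → R` (`δ ↦ δ u`, `v ↦ u × v`,
`w ↦ u · w`) is exact. Lift `g` to `G ∈ R³`, so that `u × G = f H`. Then
`0 = u · (u × G) = f (u · H)` forces `u · H = 0`, hence `H = u × B`; now `u × (G - f B) = 0`
gives `G - f B = δ u`, and `g` is the class of `δ` times `∇f` in `A³`.
-/

open MvPolynomial RingTheory.Sequence Matrix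

lemma RingTheory.Sequence.isWeaklyRegular_triple_iff {R : Type*} [CommRing R] (a b c : R) :
    IsWeaklyRegular R [a, b, c] ↔ IsSMulRegular R a ∧
      (∀ x, b * x ∈ Ideal.span {a} → x ∈ Ideal.span {a}) ∧
      (∀ x, c * x ∈ Ideal.span {a, b} → x ∈ Ideal.span {a, b}) := by
  simp only [isWeaklyRegular_iff_Fin, Fin.forall_fin_succ, List.length_cons, List.length_nil,
    isSMulRegular_quotient_iff_mem_of_smul_mem, Ideal.smul_eq_mul, Ideal.mul_top]
  simp [Ideal.ofList_cons, Ideal.span_insert, isSMulRegular_iff_right_eq_zero_of_smul]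

section Koszul

variable {R : Type*} [CommRing R] {u : Fin 3 → R}

lemma cross_eq_zero_iff {v : Fin 3 → R} :
    u ⨯₃ v = 0 ↔ u 1 * v 2 = u 2 * v 1 ∧ u 2 * v 0 = u 0 * v 2 ∧ u 0 * v 1 = u 1 * v 0 := by
  simp [cross_apply, funext_iff, Fin.forall_fin_succ, sub_eq_zero]

lemma RingHom.map_cross {S : Type*} [CommRing S] (φ : R →+* S) (v w : Fin 3 → R) :
    φ ∘ (v ⨯₃ w) = (φ ∘ v) ⨯₃ (φ ∘ w) := by
  ext s
  fin_cases s <;> simp [cross_apply]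

lemma exists_eq_smul_of_cross_eq_zero (h₀ : IsSMulRegular R (u 0))
    (h₁ : ∀ x, u 1 * x ∈ Ideal.span {u 0} → x ∈ Ideal.span {u 0}) {v : Fin 3 → R}
    (hv : u ⨯₃ v = 0) : ∃ δ : R, v = δ • u := by
  obtain ⟨-, e₁, e₂⟩ := cross_eq_zero_iff.1 hv
  obtain ⟨δ, hδ⟩ := Ideal.mem_span_singleton'.1 <| h₁ (v 0) <|
    Ideal.mem_span_singleton'.2 ⟨v 1, by rw [mul_comm, e₂]⟩
  have hv₁ : v 1 = δ * u 1 := h₀ <| by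
    simp only [smul_eq_mul]; linear_combination e₂ - u 1 * hδ
  have hv₂ : v 2 = δ * u 2 := h₀ <| by
    simp only [smul_eq_mul]; linear_combination -e₁ - u 2 * hδ
  refine ⟨δ, funext fun s => ?_⟩
  fin_cases s
  exacts [hδ.symm, hv₁, hv₂]

lemma exists_eq_cross_of_dotProduct_eq_zero (hu : IsWeaklyRegular R [u 0, u 1, u 2])
    {w : Fin 3 → R} (hw : u ⬝ᵥ w = 0) : ∃ v, w = u ⨯₃ v := by
  obtain ⟨h₀, h₁, h₂⟩ := (isWeaklyRegular_triple_iff _ _ _).1 hu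
  simp only [dotProduct, Fin.sum_univ_three] at hw
  obtain ⟨c, d, hcd⟩ := Ideal.mem_span_pair.1 <| h₂ (w 2) <|
    Ideal.mem_span_pair.2 ⟨-w 0, -w 1, by linear_combination -hw⟩
  obtain ⟨e, he⟩ := Ideal.mem_span_singleton'.1 <| h₁ (w 1 + u 2 * d) <|
    Ideal.mem_span_singleton'.2 ⟨-(w 0 + u 2 * c), by linear_combination -hw - u 2 * hcd⟩
  have hw₀ : w 0 = -(u 2 * c) - u 1 * e := h₀ <| by
    simp only [smul_eq_mul]; linear_combination hw + u 2 * hcd + u 1 * he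
  refine ⟨![-d, c, -e], funext fun s => ?_⟩
  fin_cases s <;>
    simp only [Fin.zero_eta, Fin.mk_one, Fin.reduceFinMk, Fin.isValue, cross_apply, cons_val,
      cons_val_zero, cons_val_one]
  · linear_combination hw₀
  · linear_combination -he
  · linear_combination -hcd

lemma Ideal.Quotient.exists_eq_smul_mk_of_cross_eq_zero {f : R} (hf : IsSMulRegular R f)
    (hu : IsWeaklyRegular R [u 0, u 1, u 2]) {g : Fin 3 → R ⧸ Ideal.span {f}}
    (hg : (Ideal.Quotient.mk (Ideal.span {f}) ∘ u) ⨯₃ g = 0) :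
    ∃ β : R ⧸ Ideal.span {f}, g = β • (Ideal.Quotient.mk (Ideal.span {f}) ∘ u) := by
  obtain ⟨G, rfl⟩ := Ideal.Quotient.mk_surjective.comp_left g
  have hmem s : (u ⨯₃ G) s ∈ Ideal.span {f} := by
    rw [← Ideal.Quotient.eq_zero_iff_mem]
    exact congrFun ((RingHom.map_cross _ u G).trans hg) s
  choose A hA using fun s => Ideal.mem_span_singleton'.1 (hmem s)
  have hcross : u ⨯₃ G = f • A := funext fun s => by simp [← hA, mul_comm]
  obtain ⟨B, rfl⟩ : ∃ B, A = u ⨯₃ B := by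
    refine exists_eq_cross_of_dotProduct_eq_zero hu (hf ?_)
    change f • _ = f • 0
    rw [← dotProduct_smul, ← hcross, dot_self_cross, smul_zero]
  obtain ⟨h₀, h₁, -⟩ := (isWeaklyRegular_triple_iff _ _ _).1 hu
  obtain ⟨δ, hδ⟩ := exists_eq_smul_of_cross_eq_zero h₀ h₁ (v := G - f • B) <| by
    rw [map_sub, map_smul, hcross, sub_self]
  refine ⟨Ideal.Quotient.mk _ δ, funext fun s => ?_⟩
  have hGs := congrFun hδ s
  simp only [Pi.sub_apply, Pi.smul_apply, smul_eq_mul, sub_eq_iff_eq_add] at hGs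
  simp [hGs, Ideal.Quotient.eq_zero_iff_mem.2 (Ideal.mem_span_singleton_self f)]

end Koszul

namespace MvPolynomial

variable {R σ : Type*} [CommSemiring R]

lemma mem_of_X_pow_mul_mem_span_monomial_image {S : Set (σ →₀ ℕ)} {n : σ}
    (hS : ∀ s ∈ S, s n = 0) {e : ℕ} {x : MvPolynomial σ R}
    (h : X n ^ e * x ∈ Ideal.span ((fun s => monomial s (1 : R)) '' S)) :
    x ∈ Ideal.span ((fun s => monomial s (1 : R)) '' S) := by
  rw [mem_ideal_span_monomial_image] at h ⊢
  intro m hm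
  obtain ⟨s, hs, hle⟩ := h (Finsupp.single n e + m) <| by
    rwa [mem_support_iff, X_pow_eq_monomial, coeff_monomial_mul, one_mul, ← mem_support_iff]
  refine ⟨s, hs, fun t => ?_⟩
  by_cases ht : t = n
  · simp [ht, hS s hs]
  · simpa [Finsupp.single_eq_of_ne ht] using hle t

lemma isWeaklyRegular_C_mul_X_pow {K : Type*} [Field K] {s₀ s₁ s₂ : σ}
    (h₀₁ : s₀ ≠ s₁) (h₀₂ : s₀ ≠ s₂) (h₁₂ : s₁ ≠ s₂) {c₀ c₁ c₂ : K}
    (hc₀ : c₀ ≠ 0) (hc₁ : c₁ ≠ 0) (hc₂ : c₂ ≠ 0) (p q r : ℕ) :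
    IsWeaklyRegular (MvPolynomial σ K)
      [C c₀ * X s₀ ^ p, C c₁ * X s₁ ^ q, C c₂ * X s₂ ^ r] := by
  have hunit {c : K} (hc : c ≠ 0) : IsUnit (C c : MvPolynomial σ K) := hc.isUnit.map C
  have hspan₁ : Ideal.span {C c₀ * X s₀ ^ p} =
      Ideal.span ((fun s => monomial s (1 : K)) '' {Finsupp.single s₀ p}) := by
    rw [Set.image_singleton, ← X_pow_eq_monomial,
      Ideal.span_singleton_mul_left_unit (hunit hc₀)]
  have hspan₂ : Ideal.span {C c₀ * X s₀ ^ p, C c₁ * X s₁ ^ q} =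
      Ideal.span ((fun s => monomial s (1 : K)) ''
        {Finsupp.single s₀ p, Finsupp.single s₁ q}) := by
    rw [Set.image_pair, Ideal.span_insert, Ideal.span_insert, ← X_pow_eq_monomial,
      ← X_pow_eq_monomial, Ideal.span_singleton_mul_left_unit (hunit hc₀),
      Ideal.span_singleton_mul_left_unit (hunit hc₁)]
  refine (isWeaklyRegular_triple_iff _ _ _).2
    ⟨.of_ne_zero ?_, fun x hx => ?_, fun x hx => ?_⟩
  · exact mul_ne_zero (C_ne_zero.2 hc₀) (pow_ne_zero _ (X_ne_zero _))
  · rw [hspan₁] at hx ⊢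
    refine (Ideal.unit_mul_mem_iff_mem _ (hunit hc₁)).1 <|
      mem_of_X_pow_mul_mem_span_monomial_image (n := s₁) (e := q) ?_ ?_
    · simp [Finsupp.single_eq_of_ne' h₀₁]
    · rwa [mul_left_comm, ← mul_assoc]
  · rw [hspan₂] at hx ⊢
    refine (Ideal.unit_mul_mem_iff_mem _ (hunit hc₂)).1 <|
      mem_of_X_pow_mul_mem_span_monomial_image (n := s₂) (e := r) ?_ ?_
    · simp [Finsupp.single_eq_of_ne' h₀₂, Finsupp.single_eq_of_ne' h₁₂]
    · rwa [mul_left_comm, ← mul_assoc]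

lemma pderiv_C_mul_X_pow_self (a : R) (s : σ) (n : ℕ) :
    pderiv s (C a * X s ^ n) = C (a * n) * X s ^ (n - 1) := by
  simp only [Derivation.leibniz, Derivation.leibniz_pow, pderiv_X_self, smul_eq_mul, mul_one,
    nsmul_eq_mul, derivation_C, mul_zero, add_zero, C_mul, map_natCast]
  ring

lemma pderiv_C_mul_X_pow_of_ne (a : R) {s t : σ} (h : t ≠ s) (n : ℕ) :
    pderiv s (C a * X t ^ n) = 0 := by
  simp [pderiv_X_of_ne h]

end MvPolynomial

/-- For `2 ≤ i ≤ j ≤ k`, nonzero `a₁, a₂, a₃ ∈ ℂ`,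
`f = a₁z₁^i + a₂z₂^j + a₃z₃^k` and `A = ℂ[z₁,z₂,z₃]/⟨f⟩`, with
`∇f ∧ g` the cross product of `∇f = (∂₁f,∂₂f,∂₃f)` with `g`, one has
`{g ∈ A³ : ∇f ∧ g = 0} = {β·∇f : β ∈ A}`. -/
theorem stmt_13 (i j k : ℕ) (hi : 2 ≤ i) (hij : i ≤ j) (hjk : j ≤ k)
    (a₁ a₂ a₃ : ℂ) (ha₁ : a₁ ≠ 0) (ha₂ : a₂ ≠ 0) (ha₃ : a₃ ≠ 0)
    (f : MvPolynomial (Fin 3) ℂ)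
    (hf : f = C a₁ * X 0 ^ i + C a₂ * X 1 ^ j + C a₃ * X 2 ^ k)
    (π : MvPolynomial (Fin 3) ℂ →+* (MvPolynomial (Fin 3) ℂ ⧸ Ideal.span {f}))
    (hπ : π = Ideal.Quotient.mk (Ideal.span {f})) :
    {g : (MvPolynomial (Fin 3) ℂ ⧸ Ideal.span {f}) × (MvPolynomial (Fin 3) ℂ ⧸ Ideal.span {f}) ×
        (MvPolynomial (Fin 3) ℂ ⧸ Ideal.span {f}) |
        π (pderiv 1 f) * g.2.2 - π (pderiv 2 f) * g.2.1 = 0 ∧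
        π (pderiv 2 f) * g.1 - π (pderiv 0 f) * g.2.2 = 0 ∧
        π (pderiv 0 f) * g.2.1 - π (pderiv 1 f) * g.1 = 0} =
      {g | ∃ β : MvPolynomial (Fin 3) ℂ ⧸ Ideal.span {f},
        g = β • (π (pderiv 0 f), π (pderiv 1 f), π (pderiv 2 f))} := by
  subst hπ
  have hd₀ : pderiv 0 f = C (a₁ * i) * X 0 ^ (i - 1) := by
    simp (disch := decide) only [hf, map_add, pderiv_C_mul_X_pow_self, pderiv_C_mul_X_pow_of_ne,
      add_zero]
  have hd₁ : pderiv 1 f = C (a₂ * j) * X 1 ^ (j - 1) := by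
    simp (disch := decide) only [hf, map_add, pderiv_C_mul_X_pow_self, pderiv_C_mul_X_pow_of_ne,
      add_zero, zero_add]
  have hd₂ : pderiv 2 f = C (a₃ * k) * X 2 ^ (k - 1) := by
    simp (disch := decide) only [hf, map_add, pderiv_C_mul_X_pow_self, pderiv_C_mul_X_pow_of_ne,
      add_zero, zero_add]
  have hcoeff {n : ℕ} {a : ℂ} (hn : 2 ≤ n) (ha : a ≠ 0) : a * n ≠ 0 :=
    mul_ne_zero ha (Nat.cast_ne_zero.2 (by omega))
  have hreg : IsWeaklyRegular (MvPolynomial (Fin 3) ℂ) [pderiv 0 f, pderiv 1 f, pderiv 2 f] := by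
    rw [hd₀, hd₁, hd₂]
    exact isWeaklyRegular_C_mul_X_pow (by decide) (by decide) (by decide)
      (hcoeff hi ha₁) (hcoeff (hi.trans hij) ha₂) (hcoeff (hi.trans (hij.trans hjk)) ha₃)
      _ _ _
  have hf₀ : IsSMulRegular (MvPolynomial (Fin 3) ℂ) f := .of_ne_zero fun h =>
    IsSMulRegular.not_zero (by simpa [h] using ((isWeaklyRegular_triple_iff _ _ _).1 hreg).1)
  ext g
  constructor
  · rintro ⟨h₁, h₂, h₃⟩
    obtain ⟨β, hβ⟩ := Ideal.Quotient.exists_eq_smul_mk_of_cross_eq_zero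
      (u := fun s => pderiv s f) (g := ![g.1, g.2.1, g.2.2]) hf₀ hreg <|
        cross_eq_zero_iff.2 ⟨sub_eq_zero.1 h₁, sub_eq_zero.1 h₂, sub_eq_zero.1 h₃⟩
    exact ⟨β, Prod.ext (congrFun hβ 0) (Prod.ext (congrFun hβ 1) (congrFun hβ 2))⟩
  · rintro ⟨β, rfl⟩
    refine ⟨?_, ?_, ?_⟩ <;>
    · simp only [Prod.smul_fst, Prod.smul_snd, smul_eq_mul]
      ring
end

section
/- Let 2 ≤ i ≤ j ≤ k, a₁, a₂, a₃ ∈ ℂ∖{0}, f = a₁z₁^i + a₂z₂^j + a₃z₃^k ∈ ℂ[z₁,z₂,z₃], and A := ℂ[z₁,z₂,z₃]/⟨f⟩. Let N := {g ∈ A³ : g₁∂₁f + g₂∂₂f + g₃∂₃f = 0 in A} and let M := {∇f ∧ h : h ∈ A³}, where ∇f ∧ h denotes the cross product (∂₂f·h₃ − ∂₃f·h₂, ∂₃f·h₁ − ∂₁f·h₃, ∂₁f·h₂ − ∂₂f·h₁). Then M ⊆ N and the quotient ℂ-vector space N/M has dimension (i−1)(j−1)(k−1). -/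
/-!
Put `g = ∇f`, so that `g₁ = i a₁ z₁^(i-1)`, `g₂ = j a₂ z₂^(j-1)`, `g₃ = k a₃ z₃^(k-1)`, and let
`e = (z₁/i, z₂/j, z₃/k)`, so that `e · g = f` (Euler). Then `r ↦ r • e` induces a `ℂ`-linear
isomorphism from the Milnor algebra `ℂ[z]/(g₁, g₂, g₃)` onto `N/M`. It is onto: if `p · g = r f`,
then `(p - r e) · g = 0` in `ℂ[z]`, and since the monomials `gₘ` form a regular sequence, every such
syzygy is a Koszul one, `g ∧ w`. Its kernel is the Jacobian ideal: dotting `r e ≡ g ∧ h mod f` with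
`g` gives `r f ∈ f · (g₁, g₂, g₃)`, and `f` is a nonzerodivisor. Finally `(g₁, g₂, g₃)` is the
monomial ideal `(z₁^(i-1), z₂^(j-1), z₃^(k-1))`, whose quotient has the monomials in the box
`[0, i-1) × [0, j-1) × [0, k-1)` as a basis.
-/

open MvPolynomial

/-- The first Koszul homology of `(g₁, g₂, g₃)` vanishes. -/
def SyzygiesAreKoszul {R : Type*} [CommRing R] (g₁ g₂ g₃ : R) : Prop :=
  ∀ p₁ p₂ p₃ : R, p₁ * g₁ + p₂ * g₂ + p₃ * g₃ = 0 →
    ∃ w₁ w₂ w₃ : R,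
      p₁ = g₂ * w₃ - g₃ * w₂ ∧ p₂ = g₃ * w₁ - g₁ * w₃ ∧ p₃ = g₁ * w₂ - g₂ * w₁

theorem syzygiesAreKoszul_of_mul_mem {R : Type*} [CommRing R] {g₁ g₂ g₃ : R}
    (h₁ : ∀ p, g₁ * p ∈ Ideal.span {g₂, g₃} → p ∈ Ideal.span {g₂, g₃})
    (h₂ : ∀ p, g₂ * p ∈ Ideal.span {g₃} → p ∈ Ideal.span {g₃})
    (h₃ : IsLeftRegular g₃) : SyzygiesAreKoszul g₁ g₂ g₃ := by
  intro p₁ p₂ p₃ h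
  obtain ⟨x, y, hp₁⟩ := Ideal.mem_span_pair.1 <|
    h₁ p₁ (Ideal.mem_span_pair.2 ⟨-p₂, -p₃, by linear_combination -h⟩)
  obtain ⟨t, hp₂⟩ := Ideal.mem_span_singleton'.1 <| h₂ (p₂ + x * g₁) <|
    Ideal.mem_span_singleton'.2 ⟨-(p₃ + y * g₁), by linear_combination -h - g₁ * hp₁⟩
  have hp₃ : p₃ + y * g₁ = -(g₂ * t) := h₃ (by linear_combination h + g₁ * hp₁ + g₂ * hp₂)
  exact ⟨t, -y, x, by linear_combination -hp₁, by linear_combination -hp₂,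
    by linear_combination hp₃⟩

section CrossProduct

variable {A : Type*} [CommRing A] (G : A × A × A)

def dotWith : A × A × A →ₗ[A] A where
  toFun x := x.1 * G.1 + x.2.1 * G.2.1 + x.2.2 * G.2.2
  map_add' x y := by simp only [Prod.fst_add, Prod.snd_add]; ring
  map_smul' c x := by
    simp only [Prod.smul_fst, Prod.smul_snd, smul_eq_mul, RingHom.id_apply]; ring

def crossWith : A × A × A →ₗ[A] A × A × A where
  toFun h :=
    (G.2.1 * h.2.2 - G.2.2 * h.2.1, G.2.2 * h.1 - G.1 * h.2.2, G.1 * h.2.1 - G.2.1 * h.1)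
  map_add' x y := by ext <;> simp only [Prod.fst_add, Prod.snd_add] <;> ring
  map_smul' c x := by
    ext <;> simp only [Prod.smul_fst, Prod.smul_snd, smul_eq_mul, RingHom.id_apply] <;> ring

@[simp]
theorem dotWith_apply (x : A × A × A) :
    dotWith G x = x.1 * G.1 + x.2.1 * G.2.1 + x.2.2 * G.2.2 :=
  rfl

@[simp]
theorem crossWith_apply (h : A × A × A) : crossWith G h =
    (G.2.1 * h.2.2 - G.2.2 * h.2.1, G.2.2 * h.1 - G.1 * h.2.2, G.1 * h.2.1 - G.2.1 * h.1) :=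
  rfl

theorem range_crossWith_le_ker_dotWith :
    LinearMap.range (crossWith G) ≤ LinearMap.ker (dotWith G) := by
  rintro _ ⟨h, rfl⟩
  simp only [LinearMap.mem_ker, dotWith_apply, crossWith_apply]
  ring

end CrossProduct

section SMulClass

variable (K : Type*) {R V : Type*} [CommRing K] [CommRing R] [Algebra K R] {I : Ideal R}
  [AddCommGroup V] [Module (R ⧸ I) V] [Module K V] [IsScalarTower K (R ⧸ I) V]
  {N : Submodule (R ⧸ I) V} (M : Submodule (R ⧸ I) V) {E : V}

noncomputable def smulClass (hE : E ∈ N) :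
    R →ₗ[K] ↥(N.restrictScalars K) ⧸ (M.restrictScalars K).comap (N.restrictScalars K).subtype :=
  Submodule.mkQ _ ∘ₗ LinearMap.codRestrict (N.restrictScalars K)
    ((LinearMap.toSpanSingleton (R ⧸ I) V E).restrictScalars K ∘ₗ
      (Ideal.Quotient.mkₐ K I).toLinearMap) fun _ => N.smul_mem _ hE

theorem smulClass_apply (hE : E ∈ N) (r : R) :
    smulClass K M hE r = Submodule.Quotient.mk ⟨Ideal.Quotient.mk I r • E, N.smul_mem _ hE⟩ :=
  rfl

theorem smulClass_eq_zero_iff (hE : E ∈ N) (r : R) :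
    smulClass K M hE r = 0 ↔ Ideal.Quotient.mk I r • E ∈ M :=
  Submodule.Quotient.mk_eq_zero _

end SMulClass

section EulerVector

open Ideal Ideal.Quotient LinearMap

variable (K : Type*) {R : Type*} [CommRing K] [CommRing R] [Algebra K R]
  {f g₁ g₂ g₃ e₁ e₂ e₃ : R}

theorem eulerVector_mem_ker_dotWith (heuler : e₁ * g₁ + e₂ * g₂ + e₃ * g₃ = f) :
    (mk (span {f}) e₁, mk (span {f}) e₂, mk (span {f}) e₃) ∈
      ker (dotWith (mk (span {f}) g₁, mk (span {f}) g₂, mk (span {f}) g₃)) := by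
  rw [mem_ker, dotWith_apply]
  simp only [← map_mul, ← map_add, heuler]
  exact eq_zero_iff_mem.2 (mem_span_singleton_self f)

theorem smulClass_eulerVector_surjective (heuler : e₁ * g₁ + e₂ * g₂ + e₃ * g₃ = f)
    (hkoszul : SyzygiesAreKoszul g₁ g₂ g₃) :
    Function.Surjective (smulClass K
      (range (crossWith (mk (span {f}) g₁, mk (span {f}) g₂, mk (span {f}) g₃)))
      (eulerVector_mem_ker_dotWith heuler)) := by
  intro q
  obtain ⟨⟨⟨x₁, x₂, x₃⟩, hx⟩, rfl⟩ := Submodule.mkQ_surjective _ q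
  obtain ⟨p₁, rfl⟩ := mk_surjective x₁
  obtain ⟨p₂, rfl⟩ := mk_surjective x₂
  obtain ⟨p₃, rfl⟩ := mk_surjective x₃
  rw [Submodule.restrictScalars_mem, mem_ker, dotWith_apply] at hx
  simp only [← map_mul, ← map_add, eq_zero_iff_mem, mem_span_singleton'] at hx
  obtain ⟨r, hr⟩ := hx
  obtain ⟨w₁, w₂, w₃, hw₁, hw₂, hw₃⟩ :=
    hkoszul (p₁ - r * e₁) (p₂ - r * e₂) (p₃ - r * e₃) (by linear_combination -hr - r * heuler)
  refine ⟨r, ?_⟩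
  rw [smulClass_apply, Submodule.mkQ_apply, Submodule.Quotient.eq]
  refine ⟨(mk _ (-w₁), mk _ (-w₂), mk _ (-w₃)), ?_⟩
  simp only [crossWith_apply, Submodule.subtype_apply, Submodule.coe_sub, Prod.smul_mk,
    smul_eq_mul, Prod.mk_sub_mk, ← map_mul, ← map_sub]
  ext <;> dsimp only <;> congr 1
  · linear_combination hw₁
  · linear_combination hw₂
  · linear_combination hw₃

theorem ker_smulClass_eulerVector (heuler : e₁ * g₁ + e₂ * g₂ + e₃ * g₃ = f)
    (hf : IsLeftRegular f) :
    ker (smulClass K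
      (range (crossWith (mk (span {f}) g₁, mk (span {f}) g₂, mk (span {f}) g₃)))
      (eulerVector_mem_ker_dotWith heuler)) = (span {g₁, g₂, g₃}).restrictScalars K := by
  ext r
  rw [mem_ker, smulClass_eq_zero_iff, Submodule.restrictScalars_mem]
  constructor
  · rintro ⟨⟨h₁, h₂, h₃⟩, hh⟩
    obtain ⟨q₁, rfl⟩ := mk_surjective h₁
    obtain ⟨q₂, rfl⟩ := mk_surjective h₂
    obtain ⟨q₃, rfl⟩ := mk_surjective h₃
    simp only [crossWith_apply, Prod.smul_mk, smul_eq_mul, ← map_mul, ← map_sub, Prod.mk.injEq,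
      Ideal.Quotient.eq, mem_span_singleton'] at hh
    obtain ⟨⟨s₁, hs₁⟩, ⟨s₂, hs₂⟩, ⟨s₃, hs₃⟩⟩ := hh
    have hr : r = -(s₁ * g₁ + s₂ * g₂ + s₃ * g₃) :=
      hf (by linear_combination g₁ * hs₁ + g₂ * hs₂ + g₃ * hs₃ - r * heuler)
    rw [hr]
    refine neg_mem (add_mem (add_mem ?_ ?_) ?_) <;>
      exact mul_mem_left _ _ (subset_span (by simp))
  · intro hr
    obtain ⟨a, z, hz, rfl⟩ := mem_span_insert.1 hr
    obtain ⟨b, c, rfl⟩ := mem_span_pair.1 hz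
    have hE := eulerVector_mem_ker_dotWith heuler
    rw [mem_ker, dotWith_apply] at hE
    refine ⟨(mk _ c * mk _ e₂ - mk _ b * mk _ e₃, mk _ a * mk _ e₃ - mk _ c * mk _ e₁,
      mk _ b * mk _ e₁ - mk _ a * mk _ e₂), ?_⟩
    simp only [crossWith_apply, Prod.smul_mk, smul_eq_mul, map_add, map_mul]
    ext <;> dsimp only
    · linear_combination (-1 : R ⧸ span {f}) * mk _ a * hE
    · linear_combination (-1 : R ⧸ span {f}) * mk _ b * hE
    · linear_combination (-1 : R ⧸ span {f}) * mk _ c * hE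

theorem finrank_quotient_range_crossWith (heuler : e₁ * g₁ + e₂ * g₂ + e₃ * g₃ = f)
    (hf : IsLeftRegular f) (hkoszul : SyzygiesAreKoszul g₁ g₂ g₃) :
    Module.finrank K
      (↥((ker (dotWith (mk (span {f}) g₁, mk (span {f}) g₂, mk (span {f}) g₃))).restrictScalars K) ⧸
        ((range (crossWith (mk (span {f}) g₁, mk (span {f}) g₂, mk (span {f}) g₃))).restrictScalars
          K).comap
          ((ker (dotWith (mk (span {f}) g₁, mk (span {f}) g₂,
            mk (span {f}) g₃))).restrictScalars K).subtype) =
      Module.finrank K (R ⧸ (span {g₁, g₂, g₃}).restrictScalars K) := by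
  have e := (smulClass K _ (eulerVector_mem_ker_dotWith heuler)).quotKerEquivOfSurjective
    (smulClass_eulerVector_surjective K heuler hkoszul)
  rw [ker_smulClass_eulerVector K heuler hf] at e
  exact e.finrank_eq.symm

end EulerVector

namespace MvPolynomial

theorem mem_span_monomial_of_X_pow_mul_mem {σ R : Type*} [CommSemiring R] {S : Set (σ →₀ ℕ)}
    {v : σ} (hS : ∀ s ∈ S, s v = 0) {n : ℕ} {p : MvPolynomial σ R}
    (h : X v ^ n * p ∈ Ideal.span ((fun s => monomial s (1 : R)) '' S)) :
    p ∈ Ideal.span ((fun s => monomial s (1 : R)) '' S) := by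
  rw [mem_ideal_span_monomial_image] at h ⊢
  intro d hd
  obtain ⟨s, hs, hle⟩ := h (Finsupp.single v n + d) <| by
    rwa [mem_support_iff, X_pow_eq_monomial, coeff_monomial_mul, one_mul, ← mem_support_iff]
  refine ⟨s, hs, fun w => ?_⟩
  obtain rfl | hw := eq_or_ne w v
  · simp [hS s hs]
  · simpa [Finsupp.single_apply, hw.symm] using hle w

section Box

variable {σ : Type*} [Fintype σ] (n : σ → ℕ)

noncomputable def boxMonomial (t : ∀ i, Fin (n i)) : σ →₀ ℕ :=
  Finsupp.equivFunOnFinite.symm fun i => t i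

@[simp]
theorem boxMonomial_apply (t : ∀ i, Fin (n i)) (i : σ) : boxMonomial n t i = t i :=
  rfl

theorem boxMonomial_injective : Function.Injective (boxMonomial n) := by
  intro t t' h
  ext i
  simpa using DFunLike.congr_fun h i

variable (K : Type*) [CommSemiring K]

noncomputable def boxCoeff : MvPolynomial σ K →ₗ[K] (((i : σ) → Fin (n i)) → K) :=
  LinearMap.pi fun t => lcoeff K (boxMonomial n t)

@[simp]
theorem boxCoeff_apply (p : MvPolynomial σ K) (t : ∀ i, Fin (n i)) :
    boxCoeff n K p t = coeff (boxMonomial n t) p :=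
  rfl

theorem boxCoeff_surjective : Function.Surjective (boxCoeff n K) := by
  classical
  intro w
  refine ⟨∑ t, monomial (boxMonomial n t) (w t), ?_⟩
  ext t'
  simp [coeff_sum, coeff_monomial, (boxMonomial_injective n).eq_iff]

theorem ker_boxCoeff : LinearMap.ker (boxCoeff n K) =
    (Ideal.span ((fun s => monomial s (1 : K)) ''
      Set.range fun i => Finsupp.single i (n i))).restrictScalars K := by
  ext p
  rw [LinearMap.mem_ker, Submodule.restrictScalars_mem, mem_ideal_span_monomial_image,
    _root_.funext_iff]
  simp only [Set.exists_range_iff, Finsupp.single_le_iff, boxCoeff_apply, Pi.zero_apply]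
  constructor
  · intro h d hd
    by_contra! hlt
    have hbox : boxMonomial n (fun i => ⟨d i, hlt i⟩) = d := by ext; simp
    exact mem_support_iff.1 hd (hbox ▸ h fun i => ⟨d i, hlt i⟩)
  · intro h t
    by_contra hc
    obtain ⟨i, hi⟩ := h _ (mem_support_iff.2 hc)
    exact (t i).isLt.not_ge (by simpa using hi)

theorem finrank_quotient_ker_boxCoeff [DecidableEq σ] {K : Type*} [Field K] :
    Module.finrank K (MvPolynomial σ K ⧸ LinearMap.ker (boxCoeff n K)) = ∏ i, n i := by
  rw [((boxCoeff n K).quotKerEquivOfSurjective (boxCoeff_surjective n K)).finrank_eq,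
    Module.finrank_fintype_fun_eq_card, Fintype.card_pi]
  simp

end Box

section UnitMonomials

variable {σ K : Type*} [Field K] (u : σ → K) (n : σ → ℕ)

theorem span_image_C_mul_X_pow (hu : ∀ m, u m ≠ 0) (T : Set σ) :
    Ideal.span ((fun m => C (u m) * X m ^ n m) '' T) =
      Ideal.span ((fun s => monomial s (1 : K)) '' ((fun m => Finsupp.single m (n m)) '' T)) := by
  rw [Set.image_image]
  apply le_antisymm <;> rw [Ideal.span_le] <;> rintro _ ⟨m, hm, rfl⟩
  · show C (u m) * X m ^ n m ∈ _
    rw [X_pow_eq_monomial]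
    exact Ideal.mul_mem_left _ _ (Ideal.subset_span ⟨m, hm, rfl⟩)
  · have hmon : monomial (Finsupp.single m (n m)) (1 : K) =
        C (u m)⁻¹ * (C (u m) * X m ^ n m) := by
      rw [← mul_assoc, ← C_mul, inv_mul_cancel₀ (hu m), C_1, one_mul, X_pow_eq_monomial]
    show monomial (Finsupp.single m (n m)) (1 : K) ∈ _
    rw [hmon]
    exact Ideal.mul_mem_left _ _ (Ideal.subset_span ⟨m, hm, rfl⟩)

theorem mem_span_image_C_mul_X_pow_of_mul_mem (hu : ∀ m, u m ≠ 0) {T : Set σ} {v : σ}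
    (hv : v ∉ T) {p : MvPolynomial σ K}
    (h : C (u v) * X v ^ n v * p ∈ Ideal.span ((fun m => C (u m) * X m ^ n m) '' T)) :
    p ∈ Ideal.span ((fun m => C (u m) * X m ^ n m) '' T) := by
  rw [span_image_C_mul_X_pow u n hu] at h ⊢
  rw [mul_comm (C _), mul_assoc] at h
  refine (Ideal.unit_mul_mem_iff_mem _ ((hu v).isUnit.map C)).1
    (mem_span_monomial_of_X_pow_mul_mem ?_ h)
  rintro _ ⟨m, hm, rfl⟩
  exact Finsupp.single_eq_of_ne (ne_of_mem_of_not_mem hm hv).symm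

end UnitMonomials

section UnitMonomialsFinThree

variable {K : Type*} [Field K] {u : Fin 3 → K} {n : Fin 3 → ℕ} {g : Fin 3 → MvPolynomial (Fin 3) K}

theorem syzygiesAreKoszul_of_eq_C_mul_X_pow (hu : ∀ m, u m ≠ 0)
    (hg : ∀ m, g m = C (u m) * X m ^ n m) : SyzygiesAreKoszul (g 0) (g 1) (g 2) := by
  obtain rfl : g = fun m => C (u m) * X m ^ n m := _root_.funext hg
  refine syzygiesAreKoszul_of_mul_mem (fun p hp => ?_) (fun p hp => ?_) ?_
  · simpa only [Set.image_pair] using mem_span_image_C_mul_X_pow_of_mul_mem u n hu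
      (T := {1, 2}) (v := 0) (by decide) (by simpa only [Set.image_pair] using hp)
  · simpa only [Set.image_singleton] using mem_span_image_C_mul_X_pow_of_mul_mem u n hu
      (T := {2}) (v := 1) (by decide) (by simpa only [Set.image_singleton] using hp)
  · exact (IsRegular.of_ne_zero
      (mul_ne_zero (C_ne_zero.2 (hu 2)) (pow_ne_zero _ (X_ne_zero 2)))).left

theorem span_eq_span_monomial_of_eq_C_mul_X_pow (hu : ∀ m, u m ≠ 0)
    (hg : ∀ m, g m = C (u m) * X m ^ n m) :
    Ideal.span {g 0, g 1, g 2} =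
      Ideal.span ((fun s => monomial s (1 : K)) '' Set.range fun m => Finsupp.single m (n m)) := by
  obtain rfl : g = fun m => C (u m) * X m ^ n m := _root_.funext hg
  rw [← Set.image_univ, ← span_image_C_mul_X_pow u n hu, Set.image_univ]
  congr 1
  ext
  simp [Fin.exists_fin_succ, eq_comm]

end UnitMonomialsFinThree

section BrieskornPham

variable {σ K : Type*} [Fintype σ] [Field K] (a : σ → K) (d : σ → ℕ)

noncomputable def brieskornPham : MvPolynomial σ K :=
  ∑ m, C (a m) * X m ^ d m

theorem pderiv_brieskornPham (m : σ) :
    pderiv m (brieskornPham a d) = C (a m * d m) * X m ^ (d m - 1) := by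
  classical
  simp [brieskornPham, map_sum, pderiv_X, Pi.single_apply, mul_assoc]

theorem sum_C_inv_mul_X_mul_pderiv_brieskornPham (hd : ∀ m, (d m : K) ≠ 0) :
    ∑ m, C (d m : K)⁻¹ * X m * pderiv m (brieskornPham a d) = brieskornPham a d := by
  refine Finset.sum_congr rfl fun m _ => ?_
  have hdm : 0 < d m := Nat.pos_of_ne_zero fun h => hd m (by simp [h])
  calc C (d m : K)⁻¹ * X m * pderiv m (brieskornPham a d)
      = C ((d m : K)⁻¹ * (a m * d m)) * (X m ^ (d m - 1) * X m) := by
        rw [pderiv_brieskornPham]; simp only [C_mul]; ring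
    _ = C (a m) * X m ^ d m := by
        rw [mul_comm (a m), inv_mul_cancel_left₀ (hd m), ← pow_succ, Nat.sub_add_cancel hdm]

theorem brieskornPham_ne_zero {m : σ} (ha : a m ≠ 0) (hd : (d m : K) ≠ 0) :
    brieskornPham a d ≠ 0 := by
  intro h
  have hm := pderiv_brieskornPham a d m
  rw [h, map_zero, eq_comm] at hm
  exact mul_ne_zero (C_ne_zero.2 (mul_ne_zero ha hd)) (pow_ne_zero _ (X_ne_zero m)) hm

end BrieskornPham

end MvPolynomial

/-- For `2 ≤ i ≤ j ≤ k`, nonzero `a₁, a₂, a₃ ∈ ℂ`,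
`f = a₁z₁^i + a₂z₂^j + a₃z₃^k` and `A = ℂ[z₁,z₂,z₃]/⟨f⟩`, with
`N = {g ∈ A³ : g·∇f = 0}` and `M = {∇f ∧ h : h ∈ A³}` (cross product),
one has `M ⊆ N` and `dim_ℂ N/M = (i−1)(j−1)(k−1)`. -/
theorem stmt_14 (i j k : ℕ) (hi : 2 ≤ i) (hij : i ≤ j) (hjk : j ≤ k)
    (a₁ a₂ a₃ : ℂ) (ha₁ : a₁ ≠ 0) (ha₂ : a₂ ≠ 0) (ha₃ : a₃ ≠ 0)
    (f : MvPolynomial (Fin 3) ℂ)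
    (hf : f = C a₁ * X 0 ^ i + C a₂ * X 1 ^ j + C a₃ * X 2 ^ k)
    (π : MvPolynomial (Fin 3) ℂ →+* (MvPolynomial (Fin 3) ℂ ⧸ Ideal.span {f}))
    (hπ : π = Ideal.Quotient.mk (Ideal.span {f}))
    (N M : Submodule (MvPolynomial (Fin 3) ℂ ⧸ Ideal.span {f})
      ((MvPolynomial (Fin 3) ℂ ⧸ Ideal.span {f}) × (MvPolynomial (Fin 3) ℂ ⧸ Ideal.span {f}) ×
        (MvPolynomial (Fin 3) ℂ ⧸ Ideal.span {f})))
    (hN : ∀ g, g ∈ N ↔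
      g.1 * π (pderiv 0 f) + g.2.1 * π (pderiv 1 f) + g.2.2 * π (pderiv 2 f) = 0)
    (hM : ∀ x, x ∈ M ↔ ∃ h :
        (MvPolynomial (Fin 3) ℂ ⧸ Ideal.span {f}) × (MvPolynomial (Fin 3) ℂ ⧸ Ideal.span {f}) ×
          (MvPolynomial (Fin 3) ℂ ⧸ Ideal.span {f}),
      x = (π (pderiv 1 f) * h.2.2 - π (pderiv 2 f) * h.2.1,
           π (pderiv 2 f) * h.1 - π (pderiv 0 f) * h.2.2,
           π (pderiv 0 f) * h.2.1 - π (pderiv 1 f) * h.1)) :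
    M ≤ N ∧
    Module.finrank ℂ
      (↥(N.restrictScalars ℂ) ⧸
        Submodule.comap (N.restrictScalars ℂ).subtype (M.restrictScalars ℂ)) =
      (i - 1) * (j - 1) * (k - 1) := by
  obtain rfl : N = LinearMap.ker (dotWith (π (pderiv 0 f), π (pderiv 1 f), π (pderiv 2 f))) := by
    ext; exact hN _
  obtain rfl :
      M = LinearMap.range (crossWith (π (pderiv 0 f), π (pderiv 1 f), π (pderiv 2 f))) := by
    ext; rw [hM]; exact exists_congr fun _ => eq_comm
  subst hπ
  refine ⟨range_crossWith_le_ker_dotWith _, ?_⟩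
  set a : Fin 3 → ℂ := ![a₁, a₂, a₃]
  set d : Fin 3 → ℕ := ![i, j, k]
  have ha : ∀ m, a m ≠ 0 := by intro m; fin_cases m <;> assumption
  have hd : ∀ m, (d m : ℂ) ≠ 0 := by intro m; fin_cases m <;> simp [d] <;> omega
  have hu : ∀ m, a m * d m ≠ 0 := fun m => mul_ne_zero (ha m) (hd m)
  obtain rfl : f = brieskornPham a d := by rw [hf, brieskornPham, Fin.sum_univ_three]; rfl
  have hg := pderiv_brieskornPham a d
  rw [finrank_quotient_range_crossWith ℂ
      (by simpa only [Fin.sum_univ_three] using sum_C_inv_mul_X_mul_pderiv_brieskornPham a d hd)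
      (IsRegular.of_ne_zero (brieskornPham_ne_zero a d (ha 0) (hd 0))).left
      (syzygiesAreKoszul_of_eq_C_mul_X_pow hu hg),
    span_eq_span_monomial_of_eq_C_mul_X_pow hu hg, ← ker_boxCoeff, finrank_quotient_ker_boxCoeff,
    Fin.prod_univ_three]
  rfl
end

section
/- Let 2 ≤ i ≤ j ≤ k, a₁, a₂, a₃ ∈ ℂ∖{0}, f = a₁z₁^i + a₂z₂^j + a₃z₃^k ∈ ℂ[z₁,z₂,z₃], and A := ℂ[z₁,z₂,z₃]/⟨f⟩. Then the map A² → A³ sending (g₁,g₂) to ∇f ∧ (g₁,g₂,0), where ∇f ∧ h denotes the cross product, is injective; consequently the A-submodule {∇f ∧ h : h ∈ A³} of A³ is an infinite-dimensional ℂ-vector space. -/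
open MvPolynomial

/-!
Write `d = ∂₃f = k a₃ z₃^(k-1)`. The first two components of `∇f ∧ (g₁, g₂, 0)` are `-d g₂` and
`d g₁`, so injectivity amounts to `d` being a nonzerodivisor in `A`. Since `z₃` is prime in
`ℂ[z₁,z₂,z₃]` and does not divide `f`, any `f ∣ z₃^m g` forces `f ∣ g`. For the second claim,
`g ↦ ∇f ∧ (g, 0, 0)` embeds `A` into the submodule, and `A` is infinite-dimensional because
`ℂ[z₁] → A` is injective: every value of `z₁` is attained on the zero set of `f`.
-/

section Regular

variable {R : Type*} [CommRing R] [IsDomain R]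

theorem dvd_of_dvd_prime_pow_mul {p f g : R} (hp : Prime p) (hpf : ¬p ∣ f) {m : ℕ}
    (h : f ∣ p ^ m * g) : f ∣ g := by
  obtain ⟨q, hq⟩ := h
  obtain ⟨q', rfl⟩ := hp.pow_dvd_of_dvd_mul_left m hpf ⟨g, hq.symm⟩
  exact ⟨q', mul_left_cancel₀ (pow_ne_zero m hp.ne_zero) (by rw [hq]; ring)⟩

theorem isLeftRegular_mk_unit_mul_prime_pow {p f u : R} (hp : Prime p) (hpf : ¬p ∣ f)
    (hu : IsUnit u) (m : ℕ) :
    IsLeftRegular (Ideal.Quotient.mk (Ideal.span {f}) (u * p ^ m)) := by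
  rw [isLeftRegular_iff_right_eq_zero_of_mul]
  intro x hx
  obtain ⟨g, rfl⟩ := Ideal.Quotient.mk_surjective x
  rw [← map_mul, Ideal.Quotient.eq_zero_iff_mem, Ideal.mem_span_singleton, mul_assoc,
    hu.dvd_mul_left] at hx
  rw [Ideal.Quotient.eq_zero_iff_mem, Ideal.mem_span_singleton]
  exact dvd_of_dvd_prime_pow_mul hp hpf hx

end Regular

section InfiniteDimensional

variable {σ K : Type*} [Field K] [Infinite K]

theorem injective_mk_comp_aeval_X {f : MvPolynomial σ K} (m : σ)
    (hzero : ∀ t : K, ∃ x : σ → K, x m = t ∧ eval x f = 0) :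
    Function.Injective
      ((Ideal.Quotient.mkₐ K (Ideal.span {f})).comp (Polynomial.aeval (X m))) := by
  rw [injective_iff_map_eq_zero]
  intro P hP
  rw [AlgHom.comp_apply, Ideal.Quotient.mkₐ_eq_mk, Ideal.Quotient.eq_zero_iff_mem,
    Ideal.mem_span_singleton] at hP
  obtain ⟨q, hq⟩ := hP
  refine Polynomial.zero_of_eval_zero P fun t => ?_
  obtain ⟨x, rfl, hx⟩ := hzero t
  have := congrArg (aeval x) hq
  rwa [← Polynomial.aeval_algHom_apply, aeval_X, map_mul, aeval_eq_eval, hx, zero_mul,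
    Polynomial.coe_aeval_eq_eval] at this

theorem not_finiteDimensional_quotient_span {f : MvPolynomial σ K} (m : σ)
    (hzero : ∀ t : K, ∃ x : σ → K, x m = t ∧ eval x f = 0) :
    ¬FiniteDimensional K (MvPolynomial σ K ⧸ Ideal.span {f}) := fun _ =>
  Polynomial.not_finite <| FiniteDimensional.of_injective
    ((Ideal.Quotient.mkₐ K (Ideal.span {f})).comp (Polynomial.aeval (X m))).toLinearMap
    (injective_mk_comp_aeval_X m hzero)

end InfiniteDimensional

section BrieskornPham

variable {R : Type*} [CommRing R] {a₁ a₂ a₃ : R} {i j k : ℕ}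

theorem pderiv_two_brieskornPham :
    pderiv 2 (C a₁ * X 0 ^ i + C a₂ * X 1 ^ j + C a₃ * X 2 ^ k : MvPolynomial (Fin 3) R) =
      C (a₃ * k) * X 2 ^ (k - 1) := by
  simp [pderiv_X_of_ne (show (0 : Fin 3) ≠ 2 by decide),
    pderiv_X_of_ne (show (1 : Fin 3) ≠ 2 by decide)]
  ring

theorem X_two_not_dvd_brieskornPham (ha₁ : a₁ ≠ 0) (hj : j ≠ 0) (hk : k ≠ 0) :
    ¬X 2 ∣ (C a₁ * X 0 ^ i + C a₂ * X 1 ^ j + C a₃ * X 2 ^ k : MvPolynomial (Fin 3) R) := by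
  rintro ⟨q, hq⟩
  have := congrArg (eval ![1, 0, 0]) hq
  simp [zero_pow hj, zero_pow hk] at this
  exact ha₁ this

theorem exists_eval_brieskornPham_eq_zero {K : Type*} [Field K] [IsAlgClosed K] {a₁ a₂ a₃ : K}
    (ha₃ : a₃ ≠ 0) (hk : k ≠ 0) (t : K) :
    ∃ x : Fin 3 → K, x 0 = t ∧ eval x (C a₁ * X 0 ^ i + C a₂ * X 1 ^ j + C a₃ * X 2 ^ k) = 0 := by
  obtain ⟨z, hz⟩ :=
    IsAlgClosed.exists_pow_nat_eq (-(a₁ * t ^ i + a₂ * 0 ^ j) / a₃) (Nat.pos_of_ne_zero hk)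
  refine ⟨![t, 0, z], rfl, ?_⟩
  simp [hz]
  field_simp
  ring

end BrieskornPham

theorem stmt_15_general (i j k : ℕ) (hi : 2 ≤ i) (hij : i ≤ j) (hjk : j ≤ k)
    (a₁ a₂ a₃ : ℂ) (ha₁ : a₁ ≠ 0) (ha₃ : a₃ ≠ 0)
    (f : MvPolynomial (Fin 3) ℂ)
    (hf : f = C a₁ * X 0 ^ i + C a₂ * X 1 ^ j + C a₃ * X 2 ^ k)
    (π : MvPolynomial (Fin 3) ℂ →+* (MvPolynomial (Fin 3) ℂ ⧸ Ideal.span {f}))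
    (hπ : π = Ideal.Quotient.mk (Ideal.span {f}))
    (cross : ((MvPolynomial (Fin 3) ℂ ⧸ Ideal.span {f}) ×
        (MvPolynomial (Fin 3) ℂ ⧸ Ideal.span {f}) × (MvPolynomial (Fin 3) ℂ ⧸ Ideal.span {f})) →
      (MvPolynomial (Fin 3) ℂ ⧸ Ideal.span {f}) × (MvPolynomial (Fin 3) ℂ ⧸ Ideal.span {f}) ×
        (MvPolynomial (Fin 3) ℂ ⧸ Ideal.span {f}))
    (hcross : ∀ h, cross h =
      (π (pderiv 1 f) * h.2.2 - π (pderiv 2 f) * h.2.1,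
       π (pderiv 2 f) * h.1 - π (pderiv 0 f) * h.2.2,
       π (pderiv 0 f) * h.2.1 - π (pderiv 1 f) * h.1)) :
    Function.Injective (fun g : (MvPolynomial (Fin 3) ℂ ⧸ Ideal.span {f}) ×
        (MvPolynomial (Fin 3) ℂ ⧸ Ideal.span {f}) => cross (g.1, g.2, 0)) ∧
    ¬ FiniteDimensional ℂ (Submodule.span ℂ {x | ∃ h, x = cross h}) := by
  subst hπ
  have hj : j ≠ 0 := by omega
  have hk : k ≠ 0 := by omega
  have hd : IsLeftRegular (Ideal.Quotient.mk (Ideal.span {f}) (pderiv 2 f)) := by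
    rw [hf, pderiv_two_brieskornPham]
    exact isLeftRegular_mk_unit_mul_prime_pow X_prime (X_two_not_dvd_brieskornPham ha₁ hj hk)
      ((mul_ne_zero ha₃ (Nat.cast_ne_zero.mpr hk)).isUnit.map C) _
  constructor
  · rintro ⟨g₁, g₂⟩ ⟨g₁', g₂'⟩ h
    simp only [hcross, Prod.mk.injEq, mul_zero, zero_sub, sub_zero, neg_inj] at h
    exact Prod.ext (hd h.2.1) (hd h.1)
  · intro hfin
    let Φ : (MvPolynomial (Fin 3) ℂ ⧸ Ideal.span {f}) →ₗ[ℂ]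
        Submodule.span ℂ {x | ∃ h, x = cross h} :=
      LinearMap.codRestrict _ ((0 : _ →ₗ[ℂ] _).prod
          ((LinearMap.mulLeft ℂ (Ideal.Quotient.mk _ (pderiv 2 f))).prod
            (-LinearMap.mulLeft ℂ (Ideal.Quotient.mk _ (pderiv 1 f)))))
        fun g => Submodule.subset_span ⟨(g, 0, 0), by simp [hcross]⟩
    have hΦ : Function.Injective Φ := fun g g' h => hd (congrArg (fun x => x.1.2.1) h)
    subst hf
    exact not_finiteDimensional_quotient_span 0 (exists_eval_brieskornPham_eq_zero ha₃ hk)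
      (FiniteDimensional.of_injective Φ hΦ)

/-- For `2 ≤ i ≤ j ≤ k`, nonzero `a₁, a₂, a₃ ∈ ℂ`,
`f = a₁z₁^i + a₂z₂^j + a₃z₃^k` and `A = ℂ[z₁,z₂,z₃]/⟨f⟩`, the map
`A² → A³, (g₁,g₂) ↦ ∇f ∧ (g₁,g₂,0)` is injective; consequently the
`A`-submodule `{∇f ∧ h : h ∈ A³}` of `A³` is an infinite-dimensional
ℂ-vector space. -/
theorem stmt_15 (i j k : ℕ) (hi : 2 ≤ i) (hij : i ≤ j) (hjk : j ≤ k)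
    (a₁ a₂ a₃ : ℂ) (ha₁ : a₁ ≠ 0) (ha₂ : a₂ ≠ 0) (ha₃ : a₃ ≠ 0)
    (f : MvPolynomial (Fin 3) ℂ)
    (hf : f = C a₁ * X 0 ^ i + C a₂ * X 1 ^ j + C a₃ * X 2 ^ k)
    (π : MvPolynomial (Fin 3) ℂ →+* (MvPolynomial (Fin 3) ℂ ⧸ Ideal.span {f}))
    (hπ : π = Ideal.Quotient.mk (Ideal.span {f}))
    (cross : ((MvPolynomial (Fin 3) ℂ ⧸ Ideal.span {f}) ×
        (MvPolynomial (Fin 3) ℂ ⧸ Ideal.span {f}) × (MvPolynomial (Fin 3) ℂ ⧸ Ideal.span {f})) →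
      (MvPolynomial (Fin 3) ℂ ⧸ Ideal.span {f}) × (MvPolynomial (Fin 3) ℂ ⧸ Ideal.span {f}) ×
        (MvPolynomial (Fin 3) ℂ ⧸ Ideal.span {f}))
    (hcross : ∀ h, cross h =
      (π (pderiv 1 f) * h.2.2 - π (pderiv 2 f) * h.2.1,
       π (pderiv 2 f) * h.1 - π (pderiv 0 f) * h.2.2,
       π (pderiv 0 f) * h.2.1 - π (pderiv 1 f) * h.1)) :
    Function.Injective (fun g : (MvPolynomial (Fin 3) ℂ ⧸ Ideal.span {f}) ×
        (MvPolynomial (Fin 3) ℂ ⧸ Ideal.span {f}) => cross (g.1, g.2, 0)) ∧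
    ¬ FiniteDimensional ℂ (Submodule.span ℂ {x | ∃ h, x = cross h}) :=
  stmt_15_general i j k hi hij hjk a₁ a₂ a₃ ha₁ ha₃ f hf π hπ cross hcross
end

section
/- Let k ≥ 1 and let ζ ∈ ℂ be a primitive k-th root of unity. Consider the ℂ-algebra automorphism σ of ℂ[x,y] determined by σ(x) = ζx and σ(y) = ζ⁻¹y, and let B := {p ∈ ℂ[x,y] : σ(p) = p} be the invariant subalgebra. Then: (1) B is generated as a ℂ-algebra by x^k, y^k, and xy; and (2) the ℂ-algebra homomorphism φ : ℂ[z₁,z₂,z₃] → ℂ[x,y] determined by φ(z₁) = x^k, φ(z₂) = y^k, φ(z₃) = xy has kernel equal to the ideal ⟨z₁z₂ − z₃^k⟩, so that B is isomorphic as a ℂ-algebra to ℂ[z₁,z₂,z₃]/⟨z₁z₂ − z₃^k⟩. -/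
/-!
The automorphism `σ` acts diagonally on monomials, scaling `x^a y^b` by `ζ^a ζ⁻¹^b`; so a
polynomial is invariant iff each of its monomials has `a ≡ b [MOD k]`, and such a monomial is
`(xy)^min(a,b)` times a power of `x^k` or of `y^k`.

For the kernel, the relation `z₁z₂ ≡ z₃^k` rewrites every polynomial, modulo
`⟨z₁z₂ − z₃^k⟩`, into one all of whose monomials are free of `z₁` or of `z₂`. Since `φ` sends
`z^e` to `x^(k e₁ + e₃) y^(k e₂ + e₃)`, and this exponent map is injective on such `e`, a
polynomial of this reduced form that lies in the kernel is zero.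
-/

open MvPolynomial

namespace MvPolynomial

variable {R σ τ : Type*} [CommRing R]

theorem aeval_C_mul_X_monomial (w : σ → R) (d : σ →₀ ℕ) (c : R) :
    aeval (fun i => C (w i) * X i) (monomial d c) =
      monomial d ((d.prod fun i n => w i ^ n) * c) := by
  rw [aeval_monomial, algebraMap_eq, monomial_eq, C_mul]
  simp only [mul_pow, Finsupp.prod_mul, ← C_pow, ← map_finsuppProd]
  ring

theorem coeff_aeval_C_mul_X (w : σ → R) (p : MvPolynomial σ R) (d : σ →₀ ℕ) :
    coeff d (aeval (fun i => C (w i) * X i) p) = (d.prod fun i n => w i ^ n) * coeff d p := by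
  classical
  induction p using MvPolynomial.induction_on' with
  | monomial e c =>
    rw [aeval_C_mul_X_monomial, coeff_monomial, coeff_monomial]
    split_ifs with h
    · rw [h]
    · rw [mul_zero]
  | add p q hp hq => rw [map_add, coeff_add, coeff_add, hp, hq, mul_add]

theorem aeval_C_mul_X_eq_self_iff [IsDomain R] (w : σ → R) (p : MvPolynomial σ R) :
    aeval (fun i => C (w i) * X i) p = p ↔ ∀ d ∈ p.support, (d.prod fun i n => w i ^ n) = 1 := by
  simp only [MvPolynomial.ext_iff, coeff_aeval_C_mul_X, mem_support_iff]
  exact forall_congr' fun d => ⟨fun h hd => (mul_eq_right₀ hd).mp h, fun h => by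
    by_cases hd : coeff d p = 0
    · rw [hd, mul_zero]
    · rw [h hd, one_mul]⟩

theorem coeff_map_of_injOn (F : MvPolynomial σ R →ₗ[R] MvPolynomial τ R)
    {ψ : (σ →₀ ℕ) → τ →₀ ℕ} (hF : ∀ e c, F (monomial e c) = monomial (ψ e) c)
    {S : Set (σ →₀ ℕ)} (hψ : S.InjOn ψ) {p : MvPolynomial σ R} (hp : p ∈ restrictSupport R S)
    {e : σ →₀ ℕ} (he : e ∈ S) : coeff (ψ e) (F p) = coeff e p := by
  classical
  conv_lhs => rw [p.as_sum]
  simp only [map_sum, hF, coeff_sum, coeff_monomial]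
  by_cases hpe : e ∈ p.support
  · rw [Finset.sum_eq_single_of_mem e hpe fun d hd hde => if_neg fun h => hde (hψ (hp hd) he h),
      if_pos rfl]
  · rw [notMem_support_iff.mp hpe]
    exact Finset.sum_eq_zero fun d hd => if_neg fun h => hpe (hψ (hp hd) he h ▸ hd)

end MvPolynomial

theorem IsPrimitiveRoot.pow_mul_inv_pow_eq_one_iff {K : Type*} [Field K] {ζ : K} {k : ℕ}
    (hζ : IsPrimitiveRoot ζ k) (hk : k ≠ 0) (a b : ℕ) :
    ζ ^ a * ζ⁻¹ ^ b = 1 ↔ a ≡ b [MOD k] := by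
  rw [inv_pow, mul_inv_eq_one₀ (pow_ne_zero _ (hζ.ne_zero hk)),
    (hζ.isOfFinOrder hk).pow_eq_pow_iff_modEq, ← hζ.eq_orderOf]

theorem pow_mul_pow_mem_adjoin {R A : Type*} [CommSemiring R] [CommSemiring A] [Algebra R A]
    (x y : A) {k a b : ℕ} (h : a ≡ b [MOD k]) :
    x ^ a * y ^ b ∈ Algebra.adjoin R {x ^ k, y ^ k, x * y} := by
  wlog hba : b ≤ a generalizing x y a b
  · simpa [mul_comm, Set.insert_comm] using this y x h.symm (le_of_not_ge hba)
  obtain ⟨j, rfl⟩ := Nat.exists_eq_add_of_le hba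
  obtain ⟨m, rfl⟩ : k ∣ j := by simpa using (Nat.modEq_iff_dvd' (Nat.le_add_right b j)).mp h.symm
  have hxy : x * y ∈ Algebra.adjoin R {x ^ k, y ^ k, x * y} := Algebra.subset_adjoin (by simp)
  have hx : x ^ k ∈ Algebra.adjoin R {x ^ k, y ^ k, x * y} := Algebra.subset_adjoin (by simp)
  rw [show x ^ (b + k * m) * y ^ b = (x * y) ^ b * (x ^ k) ^ m by ring]
  exact mul_mem (pow_mem hxy b) (pow_mem hx m)

theorem aeval_C_mul_X_eq_self_iff_mem_adjoin {K : Type*} [Field K] {ζ : K} {k : ℕ}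
    (hζ : IsPrimitiveRoot ζ k) (hk : k ≠ 0) (p : MvPolynomial (Fin 2) K) :
    aeval (fun i => C (![ζ, ζ⁻¹] i) * X i) p = p ↔
      p ∈ Algebra.adjoin K {X 0 ^ k, X 1 ^ k, X 0 * X 1} := by
  constructor
  · intro hp
    rw [aeval_C_mul_X_eq_self_iff] at hp
    rw [← support_sum_monomial_coeff p]
    refine Subalgebra.sum_mem _ fun d hd => ?_
    have hd := hp d hd
    simp only [Finsupp.prod_pow, Fin.prod_univ_two, Matrix.cons_val_zero, Matrix.cons_val_one,
      hζ.pow_mul_inv_pow_eq_one_iff hk] at hd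
    rw [monomial_eq, Finsupp.prod_pow, Fin.prod_univ_two]
    exact mul_mem (Subalgebra.algebraMap_mem _ _) (pow_mul_pow_mem_adjoin _ _ hd)
  · intro hp
    suffices Algebra.adjoin K {X 0 ^ k, X 1 ^ k, X 0 * X 1} ≤
        AlgHom.equalizer (aeval fun i => C (![ζ, ζ⁻¹] i) * X i) (AlgHom.id K _) from this hp
    refine Algebra.adjoin_le ?_
    rintro _ (rfl | rfl | rfl)
    · simp [mul_pow, ← C_pow, hζ.pow_eq_one]
    · simp [mul_pow, ← C_pow, inv_pow, hζ.pow_eq_one]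
    · have : C ζ * C ζ⁻¹ = (1 : MvPolynomial (Fin 2) K) := by
        rw [← C_mul, mul_inv_cancel₀ (hζ.ne_zero hk), C_1]
      simp only [SetLike.mem_coe, AlgHom.mem_equalizer, map_mul, aeval_X, AlgHom.id_apply,
        Matrix.cons_val_zero, Matrix.cons_val_one]
      linear_combination (X 0 * X 1) * this

section Kernel

variable {R : Type*} [CommRing R]

theorem monomial_equivFunOnFinite_symm_fin3 (a b c : ℕ) (r : R) :
    monomial (Finsupp.equivFunOnFinite.symm ![a, b, c]) r =
      C r * X 0 ^ a * X 1 ^ b * X 2 ^ c := by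
  simp [monomial_eq, Finsupp.prod_pow, Fin.prod_univ_three, mul_assoc]

theorem sub_mem_span_mul_X_sub_X_pow (k a b c m : ℕ) (r : R) :
    C r * X 0 ^ (a + m) * X 1 ^ (b + m) * X 2 ^ c - C r * X 0 ^ a * X 1 ^ b * X 2 ^ (c + k * m) ∈
      Ideal.span {(X 0 * X 1 - X 2 ^ k : MvPolynomial (Fin 3) R)} := by
  obtain ⟨q, hq⟩ := sub_dvd_pow_sub_pow (X 0 * X 1 : MvPolynomial (Fin 3) R) (X 2 ^ k) m
  refine Ideal.mem_span_singleton.mpr ⟨C r * X 0 ^ a * X 1 ^ b * X 2 ^ c * q, ?_⟩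
  linear_combination (C r * X 0 ^ a * X 1 ^ b * X 2 ^ c) * hq

theorem exists_mem_restrictSupport_sub_mem_span (k : ℕ) (g : MvPolynomial (Fin 3) R) :
    ∃ r ∈ restrictSupport R {e | e 0 = 0 ∨ e 1 = 0},
      g - r ∈ Ideal.span {(X 0 * X 1 - X 2 ^ k : MvPolynomial (Fin 3) R)} := by
  induction g using MvPolynomial.induction_on' with
  | monomial e r =>
    obtain ⟨a, b, c, m, hab, rfl⟩ : ∃ a b c m, (a = 0 ∨ b = 0) ∧
        e = Finsupp.equivFunOnFinite.symm ![a + m, b + m, c] :=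
      ⟨e 0 - min (e 0) (e 1), e 1 - min (e 0) (e 1), e 2, min (e 0) (e 1), by omega,
        by ext i; fin_cases i <;> simp⟩
    refine ⟨monomial (Finsupp.equivFunOnFinite.symm ![a, b, c + k * m]) r, ?_, ?_⟩
    · exact (monomial_mem_restrictSupport R).mpr (Or.inl (by simpa using hab))
    · rw [monomial_equivFunOnFinite_symm_fin3, monomial_equivFunOnFinite_symm_fin3]
      exact sub_mem_span_mul_X_sub_X_pow k a b c m r
  | add p q hp hq =>
    obtain ⟨rp, hrp, hp⟩ := hp
    obtain ⟨rq, hrq, hq⟩ := hq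
    exact ⟨rp + rq, add_mem hrp hrq, by simpa only [add_sub_add_comm] using add_mem hp hq⟩

noncomputable def imageExponent (k : ℕ) (e : Fin 3 →₀ ℕ) : Fin 2 →₀ ℕ :=
  Finsupp.equivFunOnFinite.symm ![k * e 0 + e 2, k * e 1 + e 2]

theorem aeval_monomial_eq_monomial_imageExponent (k : ℕ) (e : Fin 3 →₀ ℕ) (c : R) :
    aeval ![X 0 ^ k, X 1 ^ k, X 0 * X 1] (monomial e c) = monomial (imageExponent k e) c := by
  simp [monomial_eq, Finsupp.prod_pow, Fin.prod_univ_three, Fin.prod_univ_two, imageExponent]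
  ring

theorem imageExponent_injOn {k : ℕ} (hk : k ≠ 0) :
    Set.InjOn (imageExponent k) {e | e 0 = 0 ∨ e 1 = 0} := by
  intro e he e' he' h
  have h0 : k * e 0 + e 2 = k * e' 0 + e' 2 := congrArg (· 0) h
  have h1 : k * e 1 + e 2 = k * e' 1 + e' 2 := congrArg (· 1) h
  have hdiff : e 0 + e' 1 = e' 0 + e 1 :=
    Nat.eq_of_mul_eq_mul_left (Nat.pos_of_ne_zero hk) (by linarith)
  have h01 : e 0 = e' 0 ∧ e 1 = e' 1 := by
    rcases he with he | he <;> rcases he' with he' | he' <;> omega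
  have h2 : e 2 = e' 2 := by
    rw [h01.1] at h0
    omega
  ext i
  fin_cases i
  exacts [h01.1, h01.2, h2]

theorem ker_aeval_eq_span {k : ℕ} (hk : k ≠ 0) :
    RingHom.ker (aeval ![X 0 ^ k, X 1 ^ k, X 0 * X 1] :
        MvPolynomial (Fin 3) R →ₐ[R] MvPolynomial (Fin 2) R) =
      Ideal.span {X 0 * X 1 - X 2 ^ k} := by
  set φ : MvPolynomial (Fin 3) R →ₐ[R] MvPolynomial (Fin 2) R :=
    aeval ![X 0 ^ k, X 1 ^ k, X 0 * X 1]
  have hspan : Ideal.span {X 0 * X 1 - X 2 ^ k} ≤ RingHom.ker φ :=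
    (Ideal.span_singleton_le_iff_mem _).mpr (by simp [φ, mul_pow])
  refine le_antisymm (fun g hg => ?_) hspan
  obtain ⟨r, hr, hgr⟩ := exists_mem_restrictSupport_sub_mem_span k g
  have hφr : φ r = 0 := by
    simpa [RingHom.mem_ker.mp hg] using RingHom.mem_ker.mp (hspan hgr)
  have hr0 : r = 0 := by
    ext e
    by_cases he : e 0 = 0 ∨ e 1 = 0
    · rw [← coeff_map_of_injOn φ.toLinearMap
        (aeval_monomial_eq_monomial_imageExponent k) (imageExponent_injOn hk) hr he]
      simp [hφr]
    · exact notMem_support_iff.mp fun h => he (hr h)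
  simpa [hr0] using hgr

end Kernel

/-- Let `k ≥ 1` and `ζ` a primitive `k`-th root of unity. Let
`σ` be the ℂ-algebra endomorphism of `ℂ[x,y]` with `σ(x) = ζx`, `σ(y) = ζ⁻¹y`
and let `B = {p : σ p = p}` be the invariant subalgebra. Then (1) `B` is
generated as a ℂ-algebra by `x^k, y^k, xy`; (2) the ℂ-algebra homomorphism
`φ : ℂ[z₁,z₂,z₃] → ℂ[x,y]` with `φ(z₁) = x^k`, `φ(z₂) = y^k`, `φ(z₃) = xy`
has kernel `⟨z₁z₂ − z₃^k⟩`, so `B ≅ ℂ[z₁,z₂,z₃]/⟨z₁z₂ − z₃^k⟩`. -/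
theorem stmt_19 (k : ℕ) (hk : 1 ≤ k) (ζ : ℂ) (hζ : IsPrimitiveRoot ζ k)
    (σ : MvPolynomial (Fin 2) ℂ →ₐ[ℂ] MvPolynomial (Fin 2) ℂ)
    (hσ : σ = aeval (fun i : Fin 2 => if i = 0 then C ζ * X 0 else C ζ⁻¹ * X 1))
    (B : Subalgebra ℂ (MvPolynomial (Fin 2) ℂ))
    (hB : ∀ p, p ∈ B ↔ σ p = p)
    (φ : MvPolynomial (Fin 3) ℂ →ₐ[ℂ] MvPolynomial (Fin 2) ℂ)
    (hφ : φ = aeval ![X 0 ^ k, X 1 ^ k, X 0 * X 1]) :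
    B = Algebra.adjoin ℂ {X 0 ^ k, X 1 ^ k, X 0 * X 1} ∧
    RingHom.ker φ.toRingHom = Ideal.span {X 0 * X 1 - X 2 ^ k} ∧
    Nonempty ((MvPolynomial (Fin 3) ℂ ⧸
      Ideal.span {(X 0 : MvPolynomial (Fin 3) ℂ) * X 1 - X 2 ^ k}) ≃ₐ[ℂ] B) := by
  have hk0 : k ≠ 0 := Nat.one_le_iff_ne_zero.mp hk
  have hσ' : σ = aeval fun i => C (![ζ, ζ⁻¹] i) * X i := by
    rw [hσ]; congr; funext i; fin_cases i <;> rfl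
  have hBadjoin : B = Algebra.adjoin ℂ {X 0 ^ k, X 1 ^ k, X 0 * X 1} := by
    ext p; rw [hB, hσ', aeval_C_mul_X_eq_self_iff_mem_adjoin hζ hk0]
  have hker : RingHom.ker φ = Ideal.span {X 0 * X 1 - X 2 ^ k} := hφ ▸ ker_aeval_eq_span hk0
  have hrange : φ.range = B := by
    rw [hBadjoin, hφ, ← Algebra.adjoin_range_eq_range_aeval, Matrix.range_cons,
      Matrix.range_cons_cons_empty, Set.singleton_union]
  refine ⟨hBadjoin, hker, ⟨?_⟩⟩
  exact (Ideal.quotientEquivAlgOfEq ℂ (hker.symm.trans φ.ker_rangeRestrict.symm)).trans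
    ((Ideal.quotientKerAlgEquivOfSurjective φ.rangeRestrict_surjective).trans
      (Subalgebra.equivOfEq _ _ hrange))
end
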